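/- arXiv:1409.3165 — 7 statements merged into one kernel-verified Lean document; each statement's English description precedes it below -/
import Mathlib

section
/- Let p = (τ,R) be a mesh pattern of length k whose entire top row is shaded, i.e. {(0,k),(1,k),…,(k,k)} ⊆ R. Then for every n, a permutation π of length n avoids p if and only if its up-shift π↑ avoids the up-shift p↑. Consequently |S_n(p)| = |S_n(p↑)| for all n, i.e. p and p↑ are Wilf-equivalent. -/
/-- 1-based position boundaries of an occurrence: `posOf x 0 = 0`,
`posOf x i = x_i` (1-based) for `1 ≤ i ≤ k`, and `posOf x i = n+1` for `i > k`. -/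
def posOf {k n : ℕ} (x : Fin k → Fin n) (i : ℕ) : ℕ :=
  if h : 1 ≤ i ∧ i ≤ k then (x ⟨i - 1, by omega⟩ : ℕ) + 1
  else if i = 0 then 0 else n + 1

/-- 1-based value boundaries of an occurrence: `valOf τ x π 0 = 0`,
`valOf τ x π j = y_j`, the `j`-th smallest of the values `π(x_1),…,π(x_k)`
(which equals `π(x_{τ⁻¹(j)})` for an occurrence of the classical pattern `τ`),
and `n+1` for `j > k`. -/
def valOf {k n : ℕ} (τ : Equiv.Perm (Fin k)) (x : Fin k → Fin n)
    (π : Equiv.Perm (Fin n)) (j : ℕ) : ℕ :=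
  if h : 1 ≤ j ∧ j ≤ k then (π (x (τ.symm ⟨j - 1, by omega⟩)) : ℕ) + 1
  else if j = 0 then 0 else n + 1

/-- `π` (a permutation of length `n`, 0-indexed via `Fin n`) contains the mesh
pattern `(τ, R)`, where boxes in `R` are given with 0-based coordinates in `[0,k]²`.
All positions/values are converted to 1-based via `+1`. -/
def MeshOccursIn {k n : ℕ} (τ : Equiv.Perm (Fin k)) (R : Set (ℕ × ℕ))
    (π : Equiv.Perm (Fin n)) : Prop :=
  ∃ x : Fin k → Fin n, StrictMono x ∧
    (∀ a b : Fin k, π (x a) < π (x b) ↔ τ a < τ b) ∧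
    ∀ r ∈ R, ∀ z : Fin n,
      ¬ (posOf x r.1 < (z : ℕ) + 1 ∧ (z : ℕ) + 1 < posOf x (r.1 + 1) ∧
         valOf τ x π r.2 < (π z : ℕ) + 1 ∧ (π z : ℕ) + 1 < valOf τ x π (r.2 + 1))

/-- `π` avoids the mesh pattern `(τ, R)`. -/
def MeshAvoids {k n : ℕ} (τ : Equiv.Perm (Fin k)) (R : Set (ℕ × ℕ))
    (π : Equiv.Perm (Fin n)) : Prop := ¬ MeshOccursIn τ R π

/-!
If the top row of `(τ, R)` is shaded, every occurrence in `π` uses the entry `n` as its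
largest element, since otherwise `n` would lie in a top-row box. Rotating all values by one
therefore turns the occurrence into an occurrence of `(τ↑, R↑)` in `π↑` at the same positions:
its largest entry becomes the smallest, every other entry moves up by one, and each row of boxes
moves up by one, the empty top row becoming the (equally empty) bottom row. Conversely, the
shaded bottom row of `R↑` forces every occurrence in `π↑` to use the entry `1`, and the
correspondence runs backwards. Wilf-equivalence follows because `π ↦ π↑` is a bijection.
-/

lemma coe_finRotate' {n : ℕ} (v : Fin n) :
    (finRotate n v : ℕ) = if (v : ℕ) + 1 = n then 0 else (v : ℕ) + 1 := by
  cases n with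
  | zero => exact v.elim0
  | succ n => simp only [coe_finRotate, Fin.ext_iff, Fin.val_last, Nat.add_right_cancel_iff]

lemma coe_finRotate_symm {n : ℕ} (v : Fin n) :
    ((finRotate n).symm v : ℕ) = if (v : ℕ) = 0 then n - 1 else (v : ℕ) - 1 := by
  have h := coe_finRotate' ((finRotate n).symm v)
  rw [Equiv.apply_symm_apply] at h
  have := ((finRotate n).symm v).isLt
  split_ifs at h ⊢ <;> omega

lemma finRotate_symm_mk_zero {n : ℕ} (hn : 0 < n) :
    (finRotate n).symm ⟨0, hn⟩ = ⟨n - 1, by omega⟩ :=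
  Fin.ext ((coe_finRotate_symm _).trans (if_pos rfl))

lemma finRotate_lt_finRotate_iff {n : ℕ} (u v : Fin n) :
    finRotate n u < finRotate n v ↔ (v : ℕ) + 1 ≠ n ∧ (u < v ∨ (u : ℕ) + 1 = n) := by
  rw [Fin.lt_def, Fin.lt_def, coe_finRotate', coe_finRotate']
  have := u.isLt
  have := v.isLt
  split_ifs <;> omega

lemma finRotate_comp_lt_iff_lt_iff {ι : Type*} {n k : ℕ} (f : ι → Fin n) (g : ι → Fin k)
    (hfg : ∀ a, (f a : ℕ) + 1 = n ↔ (g a : ℕ) + 1 = k) (a b : ι) :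
    (finRotate n (f a) < finRotate n (f b) ↔ finRotate k (g a) < finRotate k (g b)) ↔
      (f a < f b ↔ g a < g b) := by
  rw [finRotate_lt_finRotate_iff, finRotate_lt_finRotate_iff]
  simp only [Fin.lt_def]
  have := hfg a
  have := hfg b
  have := (f a).isLt
  have := (g a).isLt
  omega

section Boundaries

variable {k n : ℕ} (τ : Equiv.Perm (Fin k)) (x : Fin k → Fin n) (π : Equiv.Perm (Fin n))

lemma posOf_zero : posOf x 0 = 0 := rfl

lemma posOf_of_le {i : ℕ} (h1 : 1 ≤ i) (h2 : i ≤ k) :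
    posOf x i = (x ⟨i - 1, by omega⟩ : ℕ) + 1 :=
  dif_pos ⟨h1, h2⟩

lemma posOf_of_lt {i : ℕ} (h : k < i) : posOf x i = n + 1 := by
  rw [posOf, dif_neg (by omega), if_neg (by omega)]

lemma valOf_zero : valOf τ x π 0 = 0 := rfl

lemma valOf_of_le {j : ℕ} (h1 : 1 ≤ j) (h2 : j ≤ k) :
    valOf τ x π j = (π (x (τ.symm ⟨j - 1, by omega⟩)) : ℕ) + 1 :=
  dif_pos ⟨h1, h2⟩

lemma valOf_of_lt {j : ℕ} (h : k < j) : valOf τ x π j = n + 1 := by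
  rw [valOf, dif_neg (by omega), if_neg (by omega)]

lemma valOf_le {j : ℕ} (h : j ≤ k) : valOf τ x π j ≤ n := by
  rcases Nat.eq_zero_or_pos j with rfl | h0
  · exact Nat.zero_le n
  · rw [valOf_of_le τ x π h0 h]
    exact (π _).isLt

lemma valOf_pos {j : ℕ} (h : 0 < j) : 0 < valOf τ x π j := by
  unfold valOf
  split_ifs <;> omega

end Boundaries

lemma exists_posOf_lt_lt {k n : ℕ} (x : Fin k → Fin n) {z : Fin n} (hz : z ∉ Set.range x) :
    ∃ i ≤ k, posOf x i < (z : ℕ) + 1 ∧ (z : ℕ) + 1 < posOf x (i + 1) := by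
  classical
  have hk : (z : ℕ) + 1 < posOf x (k + 1) := by
    rw [posOf_of_lt x (Nat.lt_succ_self k)]
    omega
  have hex : ∃ i, (z : ℕ) + 1 < posOf x (i + 1) := ⟨k, hk⟩
  set i := Nat.find hex
  have hik : i ≤ k := Nat.find_min' hex hk
  refine ⟨i, hik, ?_, Nat.find_spec hex⟩
  rcases Nat.eq_zero_or_pos i with h0 | h0
  · rw [h0, posOf_zero]
    omega
  · have hle : posOf x (i - 1 + 1) ≤ (z : ℕ) + 1 := not_lt.1 (Nat.find_min hex (by omega))
    have hne : x ⟨i - 1, by omega⟩ ≠ z := fun h => hz ⟨_, h⟩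
    rw [Nat.sub_add_cancel h0] at hle
    rw [posOf_of_le x h0 hik] at hle ⊢
    have := Fin.val_ne_of_ne hne
    omega

section Occurrence

variable {k n : ℕ} {τ : Equiv.Perm (Fin k)} {x : Fin k → Fin n} {π : Equiv.Perm (Fin n)}

lemma apply_add_one_le_valOf (hord : ∀ a b, π (x a) < π (x b) ↔ τ a < τ b) (a : Fin k) :
    (π (x a) : ℕ) + 1 ≤ valOf τ x π k := by
  have hk : 1 ≤ k := a.pos
  rw [valOf_of_le τ x π hk le_rfl, Nat.add_le_add_iff_right, ← Fin.le_def, ← not_lt, hord,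
    Equiv.apply_symm_apply, Fin.lt_def]
  exact Nat.not_lt.2 (Nat.le_sub_one_of_lt (τ a).isLt)

lemma valOf_one_le_apply_add_one (hord : ∀ a b, π (x a) < π (x b) ↔ τ a < τ b) (a : Fin k) :
    valOf τ x π 1 ≤ (π (x a) : ℕ) + 1 := by
  have hk : 1 ≤ k := a.pos
  rw [valOf_of_le τ x π le_rfl hk, Nat.add_le_add_iff_right, ← Fin.le_def, ← not_lt, hord,
    Equiv.apply_symm_apply, Fin.lt_def]
  exact Nat.not_lt_zero _

lemma valOf_eq_of_topRow_empty (hord : ∀ a b, π (x a) < π (x b) ↔ τ a < τ b)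
    (htop : ∀ i ≤ k, ∀ z : Fin n, ¬ (posOf x i < (z : ℕ) + 1 ∧ (z : ℕ) + 1 < posOf x (i + 1) ∧
      valOf τ x π k < (π z : ℕ) + 1 ∧ (π z : ℕ) + 1 < valOf τ x π (k + 1))) :
    valOf τ x π k = n := by
  refine le_antisymm (valOf_le τ x π le_rfl) (not_lt.1 fun hlt => ?_)
  set z := π.symm ⟨n - 1, by omega⟩
  have hπz : (π z : ℕ) + 1 = n := by
    simp only [z, Equiv.apply_symm_apply]
    omega
  have hz : z ∉ Set.range x := by
    rintro ⟨a, ha⟩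
    have := apply_add_one_le_valOf hord a
    rw [ha] at this
    omega
  obtain ⟨i, hik, hlo, hhi⟩ := exists_posOf_lt_lt x hz
  refine htop i hik z ⟨hlo, hhi, by omega, ?_⟩
  rw [valOf_of_lt τ x π (Nat.lt_succ_self k)]
  omega

lemma valOf_one_eq_of_bottomRow_empty (hord : ∀ a b, π (x a) < π (x b) ↔ τ a < τ b)
    (hbot : ∀ i ≤ k, ∀ z : Fin n, ¬ (posOf x i < (z : ℕ) + 1 ∧ (z : ℕ) + 1 < posOf x (i + 1) ∧
      valOf τ x π 0 < (π z : ℕ) + 1 ∧ (π z : ℕ) + 1 < valOf τ x π 1)) :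
    valOf τ x π 1 = 1 := by
  refine le_antisymm (not_lt.1 fun hlt => ?_) (valOf_pos τ x π one_pos)
  have hn : 0 < n := by
    rcases Nat.eq_zero_or_pos k with rfl | hk
    · rw [valOf_of_lt τ x π one_pos] at hlt
      omega
    · exact (x ⟨0, hk⟩).pos
  set z := π.symm ⟨0, hn⟩
  have hπz : (π z : ℕ) = 0 := by simp only [z, Equiv.apply_symm_apply]
  have hz : z ∉ Set.range x := by
    rintro ⟨a, ha⟩
    have := valOf_one_le_apply_add_one hord a
    rw [ha] at this
    omega
  obtain ⟨i, hik, hlo, hhi⟩ := exists_posOf_lt_lt x hz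
  exact hbot i hik z ⟨hlo, hhi, by rw [valOf_zero]; omega, by omega⟩

end Occurrence

section UpShift

variable {k n : ℕ} (τ : Equiv.Perm (Fin k)) (x : Fin k → Fin n) (π : Equiv.Perm (Fin n))

-- The hypothesis `valOf τ x π k = n` says that the occurrence `x` uses the entry `n`;
-- for `k = 0` it says `n = 0`.

lemma valOf_upShift_of_lt {j : ℕ} (hj : j < k) :
    valOf (finRotate k * τ) x (finRotate n * π) (j + 1) =
      (finRotate n (π (x (τ.symm ((finRotate k).symm ⟨j, hj⟩)))) : ℕ) + 1 := by
  rw [valOf_of_le _ x _ (by omega) (by omega)]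
  rfl

lemma apply_add_one_eq_iff_of_valOf_eq (hm : valOf τ x π k = n) (hx : Function.Injective x)
    (a : Fin k) : (π (x a) : ℕ) + 1 = n ↔ (τ a : ℕ) + 1 = k := by
  have hk : 1 ≤ k := a.pos
  rw [valOf_of_le τ x π hk le_rfl] at hm
  calc (π (x a) : ℕ) + 1 = n ↔ π (x a) = π (x (τ.symm ⟨k - 1, by omega⟩)) := by
        rw [Fin.ext_iff]; omega
    _ ↔ τ a = ⟨k - 1, by omega⟩ := by rw [π.injective.eq_iff, hx.eq_iff, Equiv.eq_symm_apply]
    _ ↔ (τ a : ℕ) + 1 = k := by rw [Fin.ext_iff]; show (τ a : ℕ) = k - 1 ↔ _; omega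

lemma valOf_upShift_succ (hm : valOf τ x π k = n) (hx : Function.Injective x) {j : ℕ}
    (hj : j ≤ k) : valOf (finRotate k * τ) x (finRotate n * π) (j + 1) = valOf τ x π j + 1 := by
  rcases hj.lt_or_eq with hj | rfl
  · rw [valOf_upShift_of_lt τ x π hj, coe_finRotate']
    have hfix := apply_add_one_eq_iff_of_valOf_eq τ x π hm hx
    rcases Nat.eq_zero_or_pos j with rfl | hj0
    · rw [finRotate_symm_mk_zero,
        if_pos ((hfix _).2 (by simp only [Equiv.apply_symm_apply]; omega)), valOf_zero]
    · have hrot : (finRotate k).symm ⟨j, hj⟩ = ⟨j - 1, by omega⟩ := by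
        ext; rw [coe_finRotate_symm, if_neg (by simp only; omega)]
      rw [hrot, if_neg (by rw [hfix]; simp only [Equiv.apply_symm_apply]; omega),
        valOf_of_le τ x π hj0 hj.le]
  · rw [valOf_of_lt _ x _ (Nat.lt_succ_self j), hm]

lemma valOf_lt_and_lt_valOf_succ_iff_upShift (hm : valOf τ x π k = n)
    (hx : Function.Injective x) {b : ℕ} (hb : b ≤ k) (z : Fin n) :
    (valOf τ x π b < (π z : ℕ) + 1 ∧ (π z : ℕ) + 1 < valOf τ x π (b + 1)) ↔
      (valOf (finRotate k * τ) x (finRotate n * π) ((b + 1) % (k + 1)) <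
          ((finRotate n * π) z : ℕ) + 1 ∧
        ((finRotate n * π) z : ℕ) + 1 <
          valOf (finRotate k * τ) x (finRotate n * π) ((b + 1) % (k + 1) + 1)) := by
  have hπz := (π z).isLt
  rw [Equiv.Perm.mul_apply, coe_finRotate']
  rcases hb.lt_or_eq with hb | rfl
  · have hle := valOf_le τ x π (show b + 1 ≤ k by omega)
    rw [Nat.mod_eq_of_lt (by omega), valOf_upShift_succ τ x π hm hx hb.le,
      valOf_upShift_succ τ x π hm hx (show b + 1 ≤ k from hb)]
    split_ifs <;> omega
  · rw [Nat.mod_self, valOf_zero, valOf_upShift_succ τ x π hm hx (Nat.zero_le _), valOf_zero, hm,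
      valOf_of_lt τ x π (Nat.lt_succ_self _)]
    split_ifs <;> omega

lemma valOf_eq_of_valOf_upShift_one (h : valOf (finRotate k * τ) x (finRotate n * π) 1 = 1) :
    valOf τ x π k = n := by
  rcases Nat.eq_zero_or_pos k with rfl | hk
  · rw [valOf_of_lt _ x _ one_pos] at h
    rw [valOf_zero]
    omega
  · rw [valOf_upShift_of_lt τ x π hk, finRotate_symm_mk_zero, coe_finRotate'] at h
    rw [valOf_of_le τ x π hk le_rfl]
    split_ifs at h with h' <;> omega

lemma upShift_order_iff (hm : valOf τ x π k = n) (hx : Function.Injective x) (a b : Fin k) :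
    ((finRotate n * π) (x a) < (finRotate n * π) (x b) ↔
        (finRotate k * τ) a < (finRotate k * τ) b) ↔
      (π (x a) < π (x b) ↔ τ a < τ b) :=
  finRotate_comp_lt_iff_lt_iff (π ∘ x) τ (apply_add_one_eq_iff_of_valOf_eq τ x π hm hx) a b

end UpShift

section MeshPattern

variable {k n : ℕ} {τ : Equiv.Perm (Fin k)} {R : Set (ℕ × ℕ)}

lemma MeshOccursIn.upShift (hR : ∀ r ∈ R, r.1 ≤ k ∧ r.2 ≤ k) (htop : ∀ i ≤ k, (i, k) ∈ R)
    {π : Equiv.Perm (Fin n)} (h : MeshOccursIn τ R π) :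
    MeshOccursIn (finRotate k * τ) ((fun r : ℕ × ℕ => (r.1, (r.2 + 1) % (k + 1))) '' R)
      (finRotate n * π) := by
  obtain ⟨x, hx, hord, hbox⟩ := h
  have hm : valOf τ x π k = n :=
    valOf_eq_of_topRow_empty hord fun i hi => hbox (i, k) (htop i hi)
  refine ⟨x, hx, fun a b => (upShift_order_iff τ x π hm hx.injective a b).2 (hord a b), ?_⟩
  rintro _ ⟨r, hr, rfl⟩ z
  rw [← valOf_lt_and_lt_valOf_succ_iff_upShift τ x π hm hx.injective (hR r hr).2]
  exact hbox r hr z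

lemma MeshOccursIn.of_upShift (hR : ∀ r ∈ R, r.1 ≤ k ∧ r.2 ≤ k) (htop : ∀ i ≤ k, (i, k) ∈ R)
    {π : Equiv.Perm (Fin n)}
    (h : MeshOccursIn (finRotate k * τ) ((fun r : ℕ × ℕ => (r.1, (r.2 + 1) % (k + 1))) '' R)
      (finRotate n * π)) :
    MeshOccursIn τ R π := by
  obtain ⟨x, hx, hord, hbox⟩ := h
  have hm : valOf τ x π k = n := by
    refine valOf_eq_of_valOf_upShift_one τ x π
      (valOf_one_eq_of_bottomRow_empty hord fun i hi => hbox (i, 0) ⟨(i, k), htop i hi, ?_⟩)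
    simp only [Nat.mod_self]
  refine ⟨x, hx, fun a b => (upShift_order_iff τ x π hm hx.injective a b).1 (hord a b), ?_⟩
  intro r hr z
  rw [valOf_lt_and_lt_valOf_succ_iff_upShift τ x π hm hx.injective (hR r hr).2]
  exact hbox _ ⟨r, hr, rfl⟩ z

end MeshPattern

/-- If the whole top row of the mesh pattern `(τ, R)` of length `k`
is shaded, then a permutation `π` avoids `(τ, R)` iff its up-shift
(`finRotate n * π`, i.e. `i ↦ (π i mod n) + 1` in 1-based terms) avoids the
up-shifted pattern `(τ↑, R↑)`; consequently `(τ,R)` and `(τ↑,R↑)` are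
Wilf-equivalent. -/
theorem upShift_wilf_equivalence {k : ℕ} (τ : Equiv.Perm (Fin k)) (R : Set (ℕ × ℕ))
    (hR : ∀ r ∈ R, r.1 ≤ k ∧ r.2 ≤ k)
    (htop : ∀ i ≤ k, (i, k) ∈ R) :
    (∀ (n : ℕ) (π : Equiv.Perm (Fin n)),
        MeshAvoids τ R π ↔
          MeshAvoids (finRotate k * τ)
            ((fun r : ℕ × ℕ => (r.1, (r.2 + 1) % (k + 1))) '' R) (finRotate n * π)) ∧
    ∀ n : ℕ,
      Nat.card {π : Equiv.Perm (Fin n) // MeshAvoids τ R π} =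
        Nat.card {π : Equiv.Perm (Fin n) //
          MeshAvoids (finRotate k * τ)
            ((fun r : ℕ × ℕ => (r.1, (r.2 + 1) % (k + 1))) '' R) π} := by
  have avoids_iff : ∀ (n : ℕ) (π : Equiv.Perm (Fin n)),
      MeshAvoids τ R π ↔
        MeshAvoids (finRotate k * τ)
          ((fun r : ℕ × ℕ => (r.1, (r.2 + 1) % (k + 1))) '' R) (finRotate n * π) :=
    fun _ _ => not_congr ⟨MeshOccursIn.upShift hR htop, MeshOccursIn.of_upShift hR htop⟩
  exact ⟨avoids_iff, fun n =>
    Nat.card_congr (Equiv.subtypeEquiv (Equiv.mulLeft (finRotate n)) (avoids_iff n))⟩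
end

section
/- (Shading Lemma) Let (τ,R) be a mesh pattern of length k, let 1 ≤ i ≤ k with τ(i) = j, and suppose the box (i,j) is not in R. Assume: (1) the box (i−1,j−1) is not in R; (2) at most one of the boxes (i,j−1) and (i−1,j) is in R; (3) for every ℓ with ℓ ≠ i−1 and ℓ ≠ i, if (ℓ,j−1) ∈ R then (ℓ,j) ∈ R; (4) for every ℓ with ℓ ≠ j−1 and ℓ ≠ j, if (i−1,ℓ) ∈ R then (i,ℓ) ∈ R. Then the patterns (τ,R) and (τ, R ∪ {(i,j)}) are coincident: a permutation avoids (τ,R) if and only if it avoids (τ, R ∪ {(i,j)}). -/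
/-!
Given an occurrence of `(τ, R)` whose box `(i, j)` contains points, move its `i`-th point to a
point `z` of that box: the highest one if `(i, j - 1) ∉ R`, otherwise (then `(i - 1, j) ∉ R`)
the rightmost one. This changes only the boundaries of column `i` and row `j`; by (1), (3) and
(4) every box of `R ∪ {(i, j)}` of the new occurrence is covered by boxes of `R` of the old one,
apart from the part of box `(i, j)` beyond `z`, which is empty by the choice of `z`.

Positions `x` and values `π ∘ x ∘ τ⁻¹` of an occurrence are both strictly increasing sequences,
and `valOf` is `posOf` of the latter, so columns and rows behave identically.
-/

open Function Set

section Boundaries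

variable {k n : ℕ}

lemma posOf_succ (x : Fin k → Fin n) (c : Fin k) : posOf x (c + 1) = x c + 1 := by
  simp [posOf]

lemma valOf_eq_posOf (τ : Equiv.Perm (Fin k)) (x : Fin k → Fin n) (π : Equiv.Perm (Fin n)) :
    valOf τ x π = posOf (π ∘ x ∘ τ.symm) := rfl

lemma monotone_posOf {x : Fin k → Fin n} (hx : StrictMono x) : Monotone (posOf x) := by
  refine monotone_nat_of_le_succ fun m => ?_
  unfold posOf
  split_ifs <;> first | contradiction | omega |
    exact Nat.succ_le_succ (hx.monotone (Fin.mk_le_mk.2 (by omega)))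

lemma posOf_update [DecidableEq (Fin k)] (x : Fin k → Fin n) (c : Fin k) (v : Fin n) :
    posOf (update x c v) = update (posOf x) (c + 1) (v + 1) := by
  funext m
  rcases eq_or_ne m (c + 1) with rfl | hm
  · simp [posOf_succ]
  · rw [update_of_ne hm]
    unfold posOf
    split_ifs with h
    · rw [update_of_ne (by simp [Fin.ext_iff]; omega)]
    all_goals rfl

end Boundaries

section Gaps

variable {p : ℕ → ℕ} {c q a t : ℕ}

lemma mem_Ioo_update_cases (hq : q ∈ Ioo (p (c + 1)) (p (c + 2)))
    (ht : t ∈ Ioo (update p (c + 1) q a) (update p (c + 1) q (a + 1))) (htc : t ≠ p (c + 1)) :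
    (a ≠ c ∧ a ≠ c + 1 ∧ t ∈ Ioo (p a) (p (a + 1))) ∨
    (a = c ∧ (t ∈ Ioo (p c) (p (c + 1)) ∨ t ∈ Ioo (p (c + 1)) (p (c + 2)) ∧ t < q)) ∨
    (a = c + 1 ∧ t ∈ Ioo (p (c + 1)) (p (c + 2)) ∧ q < t) := by
  simp only [mem_Ioo] at *
  rcases eq_or_ne a c with rfl | hac
  · simp only [update_self, update_of_ne (Nat.succ_ne_self a).symm] at ht
    omega
  rcases eq_or_ne a (c + 1) with rfl | hac'
  · simp only [update_self, update_of_ne (by omega : c + 1 + 1 ≠ c + 1)] at ht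
    exact Or.inr (Or.inr ⟨rfl, ⟨by omega, ht.2⟩, ht.1⟩)
  · simp only [update_of_ne hac', update_of_ne (by omega : a + 1 ≠ c + 1)] at ht
    omega

lemma eq_of_mem_Ioo_update (hp : Monotone p) (hq : p (c + 1) < q)
    (ht : p (c + 1) ∈ Ioo (update p (c + 1) q a) (update p (c + 1) q (a + 1))) : a = c := by
  simp only [mem_Ioo] at ht
  rcases lt_trichotomy a c with hac | rfl | hac
  · rw [update_of_ne (by omega : a + 1 ≠ c + 1)] at ht
    exact absurd (hp (show a + 1 ≤ c + 1 by omega)) (by omega)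
  · rfl
  · rcases eq_or_ne a (c + 1) with rfl | hac'
    · simp only [update_self] at ht; omega
    · rw [update_of_ne hac'] at ht
      exact absurd (hp (show c + 1 ≤ a by omega)) (by omega)

end Gaps

/-- `(t, s)` lies in box `(a, b)` of a mesh obtained from the one with column boundaries `P` and
row boundaries `V` by moving `P (c + 1)` up to `p` and `V (d + 1)` up to `q`; `hcol` and `hrow`
locate it in the old mesh, as provided by `mem_Ioo_update_cases`. -/
lemma pair_not_mem_union_singleton {R : Set (ℕ × ℕ)} {P V : ℕ → ℕ} {c d a b t s p q : ℕ}
    (hempty : ∀ r ∈ R, ¬(t ∈ Ioo (P r.1) (P (r.1 + 1)) ∧ s ∈ Ioo (V r.2) (V (r.2 + 1))))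
    (h1 : (c, d) ∉ R)
    (h3 : ∀ l, l ≠ c → l ≠ c + 1 → (l, d) ∈ R → (l, d + 1) ∈ R)
    (h4 : ∀ l, l ≠ d → l ≠ d + 1 → (c, l) ∈ R → (c + 1, l) ∈ R)
    (hext : t ∈ Ioo (P (c + 1)) (P (c + 2)) → s ∈ Ioo (V (d + 1)) (V (d + 2)) →
      (c + 1, d) ∉ R ∧ s ≤ q ∨ (c, d + 1) ∉ R ∧ t ≤ p)
    (hcol : (a ≠ c ∧ a ≠ c + 1 ∧ t ∈ Ioo (P a) (P (a + 1))) ∨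
      (a = c ∧ (t ∈ Ioo (P c) (P (c + 1)) ∨ t ∈ Ioo (P (c + 1)) (P (c + 2)) ∧ t < p)) ∨
      (a = c + 1 ∧ t ∈ Ioo (P (c + 1)) (P (c + 2)) ∧ p < t))
    (hrow : (b ≠ d ∧ b ≠ d + 1 ∧ s ∈ Ioo (V b) (V (b + 1))) ∨
      (b = d ∧ (s ∈ Ioo (V d) (V (d + 1)) ∨ s ∈ Ioo (V (d + 1)) (V (d + 2)) ∧ s < q)) ∨
      (b = d + 1 ∧ s ∈ Ioo (V (d + 1)) (V (d + 2)) ∧ q < s)) :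
    (a, b) ∉ R ∪ {(c + 1, d + 1)} := by
  intro hab
  have hold : ∀ a' b', (a', b') ∈ R → t ∈ Ioo (P a') (P (a' + 1)) →
      s ∈ Ioo (V b') (V (b' + 1)) → False := fun a' b' h ht hs => hempty _ h ⟨ht, hs⟩
  have hR : a ≠ c + 1 ∨ b ≠ d + 1 → (a, b) ∈ R := by
    intro hne
    rcases hab with hab | hab
    · exact hab
    · simp only [mem_singleton_iff, Prod.mk.injEq] at hab; omega
  rcases hcol with ⟨hac, hac', ht⟩ | ⟨rfl, ht | ⟨ht, htp⟩⟩ | ⟨rfl, ht, hpt⟩ <;>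
    rcases hrow with ⟨hbd, hbd', hs⟩ | ⟨rfl, hs | ⟨hs, hsq⟩⟩ | ⟨rfl, hs, hqs⟩
  · exact hold _ _ (hR (Or.inl hac')) ht hs
  · exact hold _ _ (hR (Or.inl hac')) ht hs
  · exact hold _ _ (h3 a hac hac' (hR (Or.inl hac'))) ht hs
  · exact hold _ _ (hR (Or.inl hac')) ht hs
  · exact hold _ _ (hR (Or.inr hbd')) ht hs
  · exact h1 (hR (Or.inl (by omega)))
  · exact h1 (hR (Or.inl (by omega)))
  · exact hold _ _ (hR (Or.inl (by omega))) ht hs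
  · exact hold _ _ (h4 b hbd hbd' (hR (Or.inr hbd'))) ht hs
  · exact h1 (hR (Or.inl (by omega)))
  · exact h1 (hR (Or.inl (by omega)))
  · rcases hext ht hs with ⟨-, hsq⟩ | ⟨hR', -⟩
    · omega
    · exact hR' (hR (Or.inl (by omega)))
  · exact hold _ _ (hR (Or.inr hbd')) ht hs
  · exact hold _ _ (hR (Or.inr (by omega))) ht hs
  · rcases hext ht hs with ⟨hR', -⟩ | ⟨-, htp⟩
    · exact hR' (hR (Or.inr (by omega)))
    · omega
  · rcases hext ht hs with ⟨-, hsq⟩ | ⟨-, htp⟩ <;> omega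

lemma StrictMono.update_of_lt {α β : Type*} [Preorder α] [Preorder β] [DecidableEq α]
    {f : α → β} (hf : StrictMono f) {c : α} {v : β} (hlo : ∀ e < c, f e < v)
    (hhi : ∀ e, c < e → v < f e) : StrictMono (update f c v) := by
  intro a b hab
  rcases eq_or_ne a c with rfl | hac
  · rw [update_self, update_of_ne (ne_of_gt hab)]
    exact hhi b hab
  rcases eq_or_ne b c with rfl | hbc
  · rw [update_self, update_of_ne hac]
    exact hlo a hab
  · rw [update_of_ne hac, update_of_ne hbc]
    exact hf hab

lemma strictMono_comp_symm_iff {α β γ : Type*} [LinearOrder α] [Preorder β] [LinearOrder γ]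
    (f : α → β) (e : α ≃ γ) : StrictMono (f ∘ e.symm) ↔ ∀ a b, f a < f b ↔ e a < e b := by
  refine ⟨fun hf a b => ?_, fun hf a b hab => ?_⟩
  · simpa using hf.lt_iff_lt (a := e a) (b := e b)
  · simpa using (hf (e.symm a) (e.symm b)).2 (by simpa using hab)

lemma Set.exists_max_image_or_max_image {α β γ : Type*} [Finite α] [LinearOrder β]
    [LinearOrder γ] {s : Set α} (hs : s.Nonempty) (f : α → β) (g : α → γ) {A B : Prop}
    (hAB : ¬(A ∧ B)) :
    ∃ z ∈ s, (¬A ∧ ∀ w ∈ s, f w ≤ f z) ∨ (¬B ∧ ∀ w ∈ s, g w ≤ g z) := by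
  by_cases hA : A
  · obtain ⟨z, hz, hmax⟩ := s.exists_max_image g s.toFinite hs
    exact ⟨z, hz, Or.inr ⟨fun hB => hAB ⟨hA, hB⟩, hmax⟩⟩
  · obtain ⟨z, hz, hmax⟩ := s.exists_max_image f s.toFinite hs
    exact ⟨z, hz, Or.inl ⟨hA, hmax⟩⟩

section Mesh

variable {k n : ℕ} {τ : Equiv.Perm (Fin k)} {π : Equiv.Perm (Fin n)}

lemma StrictMono.update_of_mem_Ioo {x : Fin k → Fin n} (hx : StrictMono x) {c : Fin k}
    {v : Fin n} (hv : (v : ℕ) + 1 ∈ Ioo (posOf x (c + 1)) (posOf x (c + 2))) :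
    StrictMono (update x c v) := by
  rw [posOf_succ] at hv
  obtain ⟨hlo, hhi⟩ := hv
  refine hx.update_of_lt (fun e he => (hx he).trans (Fin.lt_def.2 (by omega))) fun e he => ?_
  have := monotone_posOf hx (show (c : ℕ) + 2 ≤ e + 1 by omega)
  rw [posOf_succ] at this
  exact Fin.lt_def.2 (by omega)

lemma meshOccursIn_iff {R : Set (ℕ × ℕ)} :
    MeshOccursIn τ R π ↔ ∃ x : Fin k → Fin n, StrictMono x ∧ StrictMono (π ∘ x ∘ τ.symm) ∧
      ∀ r ∈ R, ∀ w : Fin n, ¬((w : ℕ) + 1 ∈ Ioo (posOf x r.1) (posOf x (r.1 + 1)) ∧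
        (π w : ℕ) + 1 ∈ Ioo (posOf (π ∘ x ∘ τ.symm) r.2) (posOf (π ∘ x ∘ τ.symm) (r.2 + 1))) :=
  exists_congr fun x =>
    and_congr_right' (and_congr (strictMono_comp_symm_iff (π ∘ x) τ).symm
      (by simp only [valOf_eq_posOf, mem_Ioo, and_assoc]))

lemma MeshOccursIn.mono {R S : Set (ℕ × ℕ)} (hRS : R ⊆ S) (h : MeshOccursIn τ S π) :
    MeshOccursIn τ R π :=
  let ⟨x, hx, hord, hempty⟩ := h
  ⟨x, hx, hord, fun r hr => hempty r (hRS hr)⟩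

end Mesh

theorem MeshOccursIn.union_singleton {k n : ℕ} {τ : Equiv.Perm (Fin k)} {R : Set (ℕ × ℕ)}
    {π : Equiv.Perm (Fin n)} (c : Fin k)
    (h1 : ((c : ℕ), (τ c : ℕ)) ∉ R)
    (h2 : ¬(((c : ℕ) + 1, (τ c : ℕ)) ∈ R ∧ ((c : ℕ), (τ c : ℕ) + 1) ∈ R))
    (h3 : ∀ l : ℕ, l ≠ c → l ≠ c + 1 → (l, (τ c : ℕ)) ∈ R → (l, (τ c : ℕ) + 1) ∈ R)
    (h4 : ∀ l : ℕ, l ≠ τ c → l ≠ τ c + 1 → ((c : ℕ), l) ∈ R → ((c : ℕ) + 1, l) ∈ R)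
    (h : MeshOccursIn τ R π) : MeshOccursIn τ (R ∪ {((c : ℕ) + 1, (τ c : ℕ) + 1)}) π := by
  classical
  rw [meshOccursIn_iff] at h ⊢
  obtain ⟨x, hx, hy, hempty⟩ := h
  set y := π ∘ x ∘ τ.symm with hy_def
  set box : Set (Fin n) := {w | (w : ℕ) + 1 ∈ Ioo (posOf x (c + 1)) (posOf x (c + 2)) ∧
    (π w : ℕ) + 1 ∈ Ioo (posOf y (τ c + 1)) (posOf y (τ c + 2))}
  rcases box.eq_empty_or_nonempty with hbox_empty | hbox_ne
  · refine ⟨x, hx, hy, ?_⟩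
    rintro r (hr | rfl) w
    exacts [hempty r hr w, fun hw => hbox_empty.subset hw]
  obtain ⟨z, hz, hext⟩ := Set.exists_max_image_or_max_image hbox_ne (fun w => π w) id h2
  have hyc : y (τ c) = π (x c) := by simp [hy_def]
  have hy' : π ∘ update x c z ∘ τ.symm = update y (τ c) (π z) := by
    rw [← Function.comp_assoc, comp_update, update_comp_equiv, Equiv.symm_symm]; rfl
  refine ⟨update x c z, hx.update_of_mem_Ioo hz.1, hy' ▸ hy.update_of_mem_Ioo hz.2, ?_⟩
  rintro ⟨a, b⟩ hab w ⟨ht, hs⟩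
  rw [posOf_update] at ht
  rw [hy', posOf_update] at hs
  by_cases hw : w = x c
  · subst hw
    rw [← posOf_succ x c] at ht
    rw [← hyc, ← posOf_succ y (τ c)] at hs
    obtain rfl := eq_of_mem_Ioo_update (monotone_posOf hx) hz.1.1 ht
    obtain rfl := eq_of_mem_Ioo_update (monotone_posOf hy) hz.2.1 hs
    rcases hab with hab | hab
    · exact h1 hab
    · simp at hab
  have hwc : (w : ℕ) ≠ x c := Fin.val_ne_iff.2 hw
  have hπwc : (π w : ℕ) ≠ y (τ c) := by rw [hyc]; exact Fin.val_ne_iff.2 (π.injective.ne hw)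
  refine pair_not_mem_union_singleton (fun r hr => hempty r hr w) h1 h3 h4 (fun htw hsw => ?_)
    (mem_Ioo_update_cases hz.1 ht (by rw [posOf_succ]; omega))
    (mem_Ioo_update_cases hz.2 hs (by rw [posOf_succ]; omega)) hab
  rcases hext with ⟨hA, hmax⟩ | ⟨hB, hmax⟩
  · exact Or.inl ⟨hA, Nat.succ_le_succ (hmax w ⟨htw, hsw⟩)⟩
  · exact Or.inr ⟨hB, Nat.succ_le_succ (hmax w ⟨htw, hsw⟩)⟩

/-- **Shading Lemma.** Under the four conditions on the mesh `R`
around the pattern point `(i, j)` (1-based, `τ(i) = j`), the patterns `(τ, R)`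
and `(τ, R ∪ {(i,j)})` are coincident. -/
theorem shading_lemma {k : ℕ} (τ : Equiv.Perm (Fin k)) (R : Set (ℕ × ℕ))
    (i j : ℕ) (hi1 : 1 ≤ i) (hik : i ≤ k) (hj1 : 1 ≤ j) (hjk : j ≤ k)
    (hτ : τ ⟨i - 1, by omega⟩ = ⟨j - 1, by omega⟩)
    (h1 : (i - 1, j - 1) ∉ R)
    (h2 : ¬((i, j - 1) ∈ R ∧ (i - 1, j) ∈ R))
    (h3 : ∀ l : ℕ, l ≠ i - 1 → l ≠ i → (l, j - 1) ∈ R → (l, j) ∈ R)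
    (h4 : ∀ l : ℕ, l ≠ j - 1 → l ≠ j → (i - 1, l) ∈ R → (i, l) ∈ R) :
    ∀ (n : ℕ) (π : Equiv.Perm (Fin n)),
      MeshAvoids τ R π ↔ MeshAvoids τ (R ∪ {(i, j)}) π := by
  intro n π
  set c : Fin k := ⟨i - 1, by omega⟩
  have hc : (c : ℕ) + 1 = i := by simp [c]; omega
  have hd : (τ c : ℕ) + 1 = j := by rw [hτ]; simp; omega
  rw [← hc, ← hd] at h1 h2 h3 h4 ⊢
  simp only [Nat.add_sub_cancel] at h1 h2 h3 h4
  exact not_congr ⟨MeshOccursIn.union_singleton c h1 h2 h3 h4, MeshOccursIn.mono subset_union_left⟩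
end

section
/- A permutation π of length n ≥ 1 avoids the mesh pattern (12, {(0,0),(0,1),(0,2)}) if and only if π(1) = n. Therefore the number of permutations of length n avoiding this pattern is (n−1)!. -/
/-!
The shaded boxes `(0,0), (0,1), (0,2)` fill the whole column left of the first point of an
occurrence, so the first point must be `π(1)` itself: `π` contains the pattern iff some later
entry exceeds `π(1)`, i.e. iff `π(1) ≠ n`. Permutations with `π(1) = n` are counted by
permuting the remaining `n - 1` entries freely.
-/

open Equiv

theorem Equiv.Perm.decomposeFin_fst {m : ℕ} (π : Perm (Fin (m + 1))) :
    (Perm.decomposeFin π).1 = π 0 := by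
  conv_rhs => rw [← Perm.decomposeFin.symm_apply_apply π]
  exact (Perm.decomposeFin_symm_apply_zero _ _).symm

theorem Equiv.Perm.card_apply_zero_eq {m : ℕ} (b : Fin (m + 1)) :
    Nat.card {π : Perm (Fin (m + 1)) // π 0 = b} = m.factorial := by
  have e : {π : Perm (Fin (m + 1)) // π 0 = b} ≃ {p : Fin (m + 1) // p = b} × Perm (Fin m) :=
    (Perm.decomposeFin.subtypeEquiv fun π ↦ by rw [Perm.decomposeFin_fst]).trans
      prodSubtypeFstEquivSubtypeProd
  rw [Nat.card_congr e, Nat.card_prod, Nat.card_unique, one_mul, Nat.card_perm, Nat.card_fin]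

theorem meshOccursIn_iff_exists_apply_zero_lt {m : ℕ} (π : Perm (Fin (m + 1))) :
    MeshOccursIn (1 : Perm (Fin 2)) {(0, 0), (0, 1), (0, 2)} π ↔ ∃ j, π 0 < π j := by
  constructor
  · rintro ⟨x, hx, hpat, hbox⟩
    have hx01 : x 0 < x 1 := hx (by decide : (0 : Fin 2) < 1)
    have hπx01 : π (x 0) < π (x 1) := (hpat 0 1).2 (by decide)
    refine ⟨x 1, lt_of_not_ge fun h ↦ ?_⟩
    rcases (Fin.zero_le (x 0)).eq_or_lt with hx0 | hx0
    · exact (h.trans_lt (hx0 ▸ hπx01)).false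
    · -- position 1 lies left of `x 0` and its value lies above `π (x 1)`: box `(0, 2)`
      have hne : π (x 1) ≠ π 0 := π.injective.ne (hx0.trans hx01).ne'
      refine hbox (0, 2) (by simp) 0 ⟨Nat.succ_pos 0, ?_, ?_, ?_⟩
      · show 1 < (x 0 : ℕ) + 1
        exact Nat.succ_lt_succ hx0
      · show (π (x 1) : ℕ) + 1 < (π 0 : ℕ) + 1
        exact Nat.succ_lt_succ (Fin.lt_def.mp (h.lt_of_ne hne))
      · show (π 0 : ℕ) + 1 < m + 1 + 1
        exact Nat.succ_lt_succ (π 0).isLt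
  · rintro ⟨j, hj⟩
    have hj0 : 0 < j := Fin.pos_iff_ne_zero.2 (by rintro rfl; exact hj.false)
    refine ⟨![0, j], ?_, ?_, ?_⟩
    · intro a b hab
      fin_cases a <;> fin_cases b <;> simp_all
    · intro a b
      fin_cases a <;> fin_cases b <;> simp [hj, hj.not_gt]
    · rintro r hr z ⟨-, hz1, -⟩
      obtain rfl | rfl | rfl := hr <;> exact absurd hz1 (by show ¬ _ < 0 + 1; omega)

theorem meshAvoids_iff_apply_zero_eq_last {m : ℕ} (π : Perm (Fin (m + 1))) :
    MeshAvoids (1 : Perm (Fin 2)) {(0, 0), (0, 1), (0, 2)} π ↔ π 0 = Fin.last m := by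
  rw [MeshAvoids, meshOccursIn_iff_exists_apply_zero_lt, ← not_ne_iff, ← Fin.lt_last_iff_ne_last]
  exact not_congr ⟨fun ⟨j, hj⟩ ↦ hj.trans_le (Fin.le_last _),
    fun h ↦ ⟨π.symm (Fin.last m), by rwa [π.apply_symm_apply]⟩⟩

/-- A permutation of length `n ≥ 1` avoids `(12, {(0,0),(0,1),(0,2)})` iff it starts with `n`; hence `(n-1)!` avoiders. -/
theorem stmt2 (n : ℕ) (hn : 1 ≤ n) :
    (∀ π : Equiv.Perm (Fin n),
      MeshAvoids (1 : Equiv.Perm (Fin 2)) {(0,0),(0,1),(0,2)} π ↔ π ⟨0, by omega⟩ = ⟨n - 1, by omega⟩) ∧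
    Nat.card {π : Equiv.Perm (Fin n) //
      MeshAvoids (1 : Equiv.Perm (Fin 2)) {(0,0),(0,1),(0,2)} π} = (n - 1).factorial := by
  obtain ⟨m, rfl⟩ : ∃ m, n = m + 1 := ⟨n - 1, by omega⟩
  refine ⟨meshAvoids_iff_apply_zero_eq_last, ?_⟩
  rw [Nat.card_congr (Equiv.subtypeEquivRight meshAvoids_iff_apply_zero_eq_last)]
  exact Perm.card_apply_zero_eq _
end

section
/- For every n ≥ 2 and every k, the number of permutations of length n that avoid the mesh pattern (12, {(0,0),(0,1),(1,0),(1,1)}) and have exactly k descents equals the number of permutations of length n−1 that have exactly k−1 descents. In particular, the number of permutations of length n avoiding this pattern is (n−1)! for all n ≥ 1. -/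
/-- The number of descents of `π`: indices `i` (1-based `1 ≤ i ≤ n-1`) with
`π(i) > π(i+1)`; counted here as pairs of adjacent positions. -/
def descents {n : ℕ} (π : Equiv.Perm (Fin n)) : ℕ :=
  (Finset.univ.filter fun p : Fin n × Fin n =>
    (p.1 : ℕ) + 1 = (p.2 : ℕ) ∧ π p.2 < π p.1).card

/-!
Encode a permutation `π` of length `n` by its code `c_j = #{i < j | π i < π j} ∈ {0, …, j}`;
reading positions from the right recovers `π`, so this is a bijection onto the `n!` such
sequences. An occurrence of the mesh pattern is exactly an entry with a single smaller entry to
its left, so the avoiders are the permutations whose code has no entry `1`. A descent at `j` is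
a `j` with `c_{j+1} ≤ c_j`. For a code without `1`s, `c_0 = c_1 = 0` gives a descent at the first
position; deleting `c_0` and lowering every other nonzero entry by one is a bijection onto all
codes of length `n - 1`, which preserves the remaining descents.
-/

open Finset Equiv

lemma card_filter_adjacent {m : ℕ} (r : Fin (m + 1) → Fin (m + 1) → Prop) [DecidableRel r] :
    #{p : Fin (m + 1) × Fin (m + 1) | (p.1 : ℕ) + 1 = p.2 ∧ r p.1 p.2} =
      #{i : Fin m | r i.castSucc i.succ} := by
  symm
  refine card_bij (fun i _ => (i.castSucc, i.succ)) (fun i hi => by simpa using hi)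
    (fun i _ j _ h => by simpa using congrArg Prod.snd h) fun p hp => ?_
  simp only [mem_filter, mem_univ, true_and] at hp
  refine ⟨⟨p.1, by omega⟩, by simpa [Fin.ext_iff, hp.1] using hp.2, ?_⟩
  ext <;> simp [hp.1]

lemma card_filter_lt_and_lt_of_lt {α : Type*} [Fintype α] [LinearOrder α] (p : α → Prop)
    [DecidablePred p] {v w : α} (hvw : v < w) (hv : p v) :
    #{u | u < v ∧ p u} < #{u | u < w ∧ p u} := by
  refine card_lt_card ⟨fun u hu => ?_, fun hsub => ?_⟩
  · simp only [mem_filter, mem_univ, true_and] at hu ⊢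
    exact ⟨hu.1.trans hvw, hu.2⟩
  · simpa using hsub (by simpa using ⟨hvw, hv⟩ : v ∈ ({u | u < w ∧ p u} : Finset α))

abbrev SubexcedantSeq (n : ℕ) := ∀ j : Fin n, Fin (j + 1)

namespace SubexcedantSeq

variable {m : ℕ}

lemma card_eq_factorial (n : ℕ) : Nat.card (SubexcedantSeq n) = n.factorial := by
  rw [Nat.card_pi]
  simp only [Nat.card_eq_fintype_card, Fintype.card_fin]
  rw [Fin.prod_univ_eq_prod_range (· + 1), prod_range_add_one_eq_factorial]

def weakDescents (c : SubexcedantSeq (m + 1)) : ℕ :=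
  #{i : Fin m | (c i.succ : ℕ) ≤ c i.castSucc}

def neOneEquiv : {c : SubexcedantSeq (m + 1) // ∀ j, (c j : ℕ) ≠ 1} ≃ SubexcedantSeq m where
  toFun c j := ⟨c.1 j.succ - 1, by have : (c.1 j.succ : ℕ) < j + 2 := (c.1 _).isLt; omega⟩
  invFun d := ⟨Fin.cons 0 fun j => ⟨if (d j : ℕ) = 0 then 0 else d j + 1,
      by have := (d j).isLt; simp only [Fin.val_succ]; split_ifs <;> omega⟩,
    Fin.cases (by simp) fun j => by simp only [Fin.cons_succ]; split_ifs <;> simp [*]⟩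
  left_inv c := by
    ext j
    cases j using Fin.cases with
    | zero => exact (Nat.lt_one_iff.1 (c.1 0).isLt).symm
    | succ j => have := c.2 j.succ; simp only [Fin.cons_succ]; split_ifs <;> omega
  right_inv d := by
    ext j
    simp only [Fin.cons_succ]
    split_ifs <;> simp [*]

lemma weakDescents_eq_neOneEquiv_add_one
    (c : {c : SubexcedantSeq (m + 2) // ∀ j, (c j : ℕ) ≠ 1}) :
    weakDescents c.1 = weakDescents (neOneEquiv c) + 1 := by
  rw [weakDescents, Fin.card_filter_univ_succ, if_pos]
  · congr 2
    refine filter_congr fun i _ => ?_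
    have := c.2 i.succ.succ
    have := c.2 i.castSucc.succ
    simp only [neOneEquiv, Equiv.coe_fn_mk, Fin.succ_castSucc]
    omega
  · have h1 := c.2 (Fin.succ 0)
    have h2 : (c.1 (Fin.succ 0) : ℕ) < 2 := (c.1 _).isLt
    omega

end SubexcedantSeq

open SubexcedantSeq

namespace Equiv.Perm

variable {n : ℕ}

def smallerLeftCount (π : Perm (Fin n)) (b : Fin n) : ℕ := #{z | z < b ∧ π z < π b}

lemma smallerLeftCount_lt (π : Perm (Fin n)) (b : Fin n) : π.smallerLeftCount b < b + 1 :=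
  Nat.lt_succ_of_le <| (card_le_card fun z hz => by simp_all).trans_eq (Fin.card_Iio b)

lemma smallerLeftCount_eq_one_iff (π : Perm (Fin n)) (b : Fin n) :
    π.smallerLeftCount b = 1 ↔ ∃ a, a < b ∧ π a < π b ∧ ∀ z, z < b → π z < π b → z = a := by
  simp only [smallerLeftCount, card_eq_one, Finset.ext_iff, mem_filter, mem_univ, true_and,
    mem_singleton]
  refine exists_congr fun a => ⟨fun h => ⟨((h a).2 rfl).1, ((h a).2 rfl).2, fun z hz hπz =>
    (h z).1 ⟨hz, hπz⟩⟩, fun ⟨hab, hπab, h⟩ z => ⟨fun hz => h z hz.1 hz.2, ?_⟩⟩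
  rintro rfl
  exact ⟨hab, hπab⟩

lemma smallerLeftCount_lt_of_lt {π : Perm (Fin n)} {a b : Fin n} (hab : a < b) (h : π a < π b) :
    π.smallerLeftCount a < π.smallerLeftCount b := by
  refine card_lt_card ⟨fun z hz => ?_, fun hsub => ?_⟩
  · simp only [mem_filter, mem_univ, true_and] at hz ⊢
    exact ⟨hz.1.trans hab, hz.2.trans h⟩
  · simpa using hsub (by simpa using ⟨hab, h⟩ : a ∈ ({z | z < b ∧ π z < π b} : Finset (Fin n)))

lemma smallerLeftCount_eq_card_symm (π : Perm (Fin n)) (j : Fin n) :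
    π.smallerLeftCount j = #{u | u < π j ∧ π.symm u ≤ j} := by
  refine card_nbij' π π.symm (fun z hz => ?_) (fun u hu => ?_) (fun z _ => by simp)
    (fun u _ => by simp)
  · simp_all [le_of_lt]
  · simp only [coe_filter, Set.mem_ofPred_eq, mem_univ, true_and] at hu ⊢
    refine ⟨lt_of_le_of_ne hu.2 ?_, by simpa using hu.1⟩
    rintro rfl
    simp at hu

lemma apply_eq_of_smallerLeftCount_eq {π π' : Perm (Fin n)} {j : Fin n}
    (hright : ∀ i, j < i → π i = π' i) (h : π.smallerLeftCount j = π'.smallerLeftCount j) :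
    π j = π' j := by
  have hleft : ∀ u, π.symm u ≤ j ↔ π'.symm u ≤ j := fun u => not_iff_not.mp <| by
    simp only [not_le]
    exact ⟨fun hu => by rwa [π'.symm_apply_eq.2 (by rw [← hright _ hu, apply_symm_apply])],
      fun hu => by rwa [π.symm_apply_eq.2 (by rw [hright _ hu, apply_symm_apply])]⟩
  rw [smallerLeftCount_eq_card_symm, smallerLeftCount_eq_card_symm] at h
  simp only [hleft] at h
  rcases lt_trichotomy (π j) (π' j) with hlt | heq | hgt
  · exact absurd h (card_filter_lt_and_lt_of_lt _ hlt (by simp [← hleft])).ne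
  · exact heq
  · exact absurd h (card_filter_lt_and_lt_of_lt _ hgt (by simp)).ne'

lemma apply_succ_lt_iff {m : ℕ} (π : Perm (Fin (m + 1))) (i : Fin m) :
    π i.succ < π i.castSucc ↔ π.smallerLeftCount i.succ ≤ π.smallerLeftCount i.castSucc := by
  refine ⟨fun h => card_le_card fun z hz => ?_, fun h => ?_⟩
  · simp only [mem_filter, mem_univ, true_and] at hz ⊢
    refine ⟨lt_of_le_of_ne (Fin.le_castSucc_iff.2 hz.1) ?_, hz.2.trans h⟩
    rintro rfl
    exact (hz.2.trans h).false
  · by_contra! hlt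
    exact h.not_gt (smallerLeftCount_lt_of_lt (Fin.castSucc_lt_succ (i := i))
      (lt_of_le_of_ne hlt (π.injective.ne (Fin.castSucc_lt_succ (i := i)).ne)))

def subexcedantCode (π : Perm (Fin n)) : SubexcedantSeq n :=
  fun j => ⟨π.smallerLeftCount j, π.smallerLeftCount_lt j⟩

lemma subexcedantCode_injective : Function.Injective (subexcedantCode (n := n)) := by
  intro π π' h
  ext1 j
  induction j using WellFoundedGT.induction with
  | _ j ih => exact apply_eq_of_smallerLeftCount_eq ih (congrArg Fin.val (congrFun h j))

noncomputable def subexcedantCodeEquiv : Perm (Fin n) ≃ SubexcedantSeq n :=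
  .ofBijective subexcedantCode <| subexcedantCode_injective.bijective_of_nat_card_le <| by
    rw [SubexcedantSeq.card_eq_factorial, Nat.card_perm, Nat.card_eq_fintype_card,
      Fintype.card_fin]

lemma descents_eq_weakDescents_subexcedantCode {m : ℕ} (π : Perm (Fin (m + 1))) :
    descents π = weakDescents (subexcedantCodeEquiv π) := by
  rw [descents, card_filter_adjacent fun i j => π j < π i]
  exact congrArg card (filter_congr fun i _ => apply_succ_lt_iff π i)

end Equiv.Perm

open Equiv.Perm

lemma posOf_fin_two {n : ℕ} (x : Fin 2 → Fin n) :
    posOf x 0 = 0 ∧ posOf x 1 = x 0 + 1 ∧ posOf x 2 = x 1 + 1 := by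
  simp [posOf]

lemma valOf_one_fin_two {n : ℕ} (x : Fin 2 → Fin n) (π : Perm (Fin n)) :
    valOf 1 x π 0 = 0 ∧ valOf 1 x π 1 = π (x 0) + 1 ∧ valOf 1 x π 2 = π (x 1) + 1 := by
  simp [valOf, ← Perm.inv_def]

lemma twelve_boxes_empty_iff {n : ℕ} {π : Perm (Fin n)} {x : Fin 2 → Fin n} (hx : x 0 < x 1)
    (hπ : π (x 0) < π (x 1)) :
    (∀ r ∈ ({(0,0),(0,1),(1,0),(1,1)} : Set (ℕ × ℕ)), ∀ z : Fin n,
      ¬ (posOf x r.1 < (z : ℕ) + 1 ∧ (z : ℕ) + 1 < posOf x (r.1 + 1) ∧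
         valOf 1 x π r.2 < (π z : ℕ) + 1 ∧ (π z : ℕ) + 1 < valOf 1 x π (r.2 + 1))) ↔
      ∀ z, z < x 1 → π z < π (x 1) → z = x 0 := by
  obtain ⟨p0, p1, p2⟩ := posOf_fin_two x
  obtain ⟨v0, v1, v2⟩ := valOf_one_fin_two x π
  simp only [Set.mem_insert_iff, Set.mem_singleton_iff, forall_eq_or_imp, forall_eq,
    p0, p1, p2, v0, v1, v2]
  refine ⟨fun ⟨h00, h01, h10, h11⟩ z hz hπz => ?_, fun h => ⟨?_, ?_, ?_, ?_⟩⟩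
  · by_contra hne
    have hne' := Fin.val_injective.ne hne
    have hπne := Fin.val_injective.ne (π.injective.ne hne)
    rw [Fin.lt_def] at hz hπz
    specialize h00 z; specialize h01 z; specialize h10 z; specialize h11 z
    omega
  all_goals
    rw [Fin.lt_def] at hx hπ
    intro z hbox
    obtain rfl := h z (Fin.lt_def.2 (by omega)) (Fin.lt_def.2 (by omega))
    omega

lemma meshOccursIn_twelve_iff {n : ℕ} (π : Perm (Fin n)) :
    MeshOccursIn (1 : Perm (Fin 2)) {(0,0),(0,1),(1,0),(1,1)} π ↔
      ∃ a b, a < b ∧ π a < π b ∧ ∀ z, z < b → π z < π b → z = a := by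
  constructor
  · rintro ⟨x, hx, hπx, hbox⟩
    have hx01 : x 0 < x 1 := hx Fin.zero_lt_one
    have hπx01 : π (x 0) < π (x 1) := (hπx 0 1).2 (by decide)
    exact ⟨x 0, x 1, hx01, hπx01, (twelve_boxes_empty_iff hx01 hπx01).1 hbox⟩
  · rintro ⟨a, b, hab, hπab, h⟩
    refine ⟨![a, b], Fin.strictMono_iff_lt_succ.2 fun i => ?_, fun i j => ?_,
      (twelve_boxes_empty_iff (x := ![a, b]) hab hπab).2 h⟩
    · fin_cases i
      exact hab
    · fin_cases i <;> fin_cases j <;> simp [hπab, hπab.not_gt]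

lemma meshAvoids_twelve_iff {n : ℕ} (π : Perm (Fin n)) :
    MeshAvoids (1 : Perm (Fin 2)) {(0,0),(0,1),(1,0),(1,1)} π ↔
      ∀ j, (subexcedantCodeEquiv π j : ℕ) ≠ 1 := by
  change ¬ _ ↔ ∀ j, π.smallerLeftCount j ≠ 1
  simp only [meshOccursIn_twelve_iff, exists_comm (α := Fin n), ← smallerLeftCount_eq_one_iff,
    not_exists, ne_eq]

noncomputable def twelveAvoidersEquiv (m : ℕ) :
    {π : Perm (Fin (m + 1)) // MeshAvoids (1 : Perm (Fin 2)) {(0,0),(0,1),(1,0),(1,1)} π} ≃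
      SubexcedantSeq m :=
  (subexcedantCodeEquiv.subtypeEquiv meshAvoids_twelve_iff).trans neOneEquiv

lemma descents_eq_weakDescents_twelveAvoidersEquiv_add_one {m : ℕ}
    (π : {π : Perm (Fin (m + 2)) // MeshAvoids (1 : Perm (Fin 2)) {(0,0),(0,1),(1,0),(1,1)} π}) :
    descents π.1 = weakDescents (twelveAvoidersEquiv (m + 1) π) + 1 := by
  rw [descents_eq_weakDescents_subexcedantCode]
  exact weakDescents_eq_neOneEquiv_add_one ⟨_, (meshAvoids_twelve_iff _).1 π.2⟩

/-- For `n ≥ 2` and every `k`, the number of permutations of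
length `n` avoiding `(12, {(0,0),(0,1),(1,0),(1,1)})` with exactly `k` descents equals the number of
permutations of length `n-1` with exactly `k-1` descents (stated as
`descents σ + 1 = k`, so that `k = 0` gives the empty count on both sides).
In particular the number of avoiders of length `n ≥ 1` is `(n-1)!`. -/
theorem stmt5 :
    (∀ n : ℕ, 2 ≤ n → ∀ k : ℕ,
      Nat.card {π : Equiv.Perm (Fin n) //
        MeshAvoids (1 : Equiv.Perm (Fin 2)) {(0,0),(0,1),(1,0),(1,1)} π ∧ descents π = k} =
      Nat.card {σ : Equiv.Perm (Fin (n - 1)) // descents σ + 1 = k}) ∧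
    ∀ n : ℕ, 1 ≤ n →
      Nat.card {π : Equiv.Perm (Fin n) //
        MeshAvoids (1 : Equiv.Perm (Fin 2)) {(0,0),(0,1),(1,0),(1,1)} π} = (n - 1).factorial := by
  refine ⟨fun n hn k => ?_, fun n hn => ?_⟩
  · obtain ⟨m, rfl⟩ : ∃ m, n = m + 2 := ⟨n - 2, by omega⟩
    refine Nat.card_congr <| (subtypeSubtypeEquivSubtypeInter _ _).symm.trans <|
      ((twelveAvoidersEquiv (m + 1)).subtypeEquiv (q := fun d => weakDescents d + 1 = k)
        fun π => ?_).trans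
      (subexcedantCodeEquiv.subtypeEquiv fun σ => ?_).symm
    · rw [descents_eq_weakDescents_twelveAvoidersEquiv_add_one]
    · rw [descents_eq_weakDescents_subexcedantCode]
  · obtain ⟨m, rfl⟩ : ∃ m, n = m + 1 := ⟨n - 1, by omega⟩
    rw [Nat.card_congr (twelveAvoidersEquiv m), SubexcedantSeq.card_eq_factorial]
    rfl
end

section
/- For every n ≥ 2 and every k, the number of permutations of length n that avoid the mesh pattern (12, {(0,1),(1,1),(1,2),(2,1)}) and have exactly k descents equals the number of permutations of length n−1 that have exactly k−1 descents. In particular, the number of permutations of length n avoiding this pattern is (n−1)! for all n ≥ 1. -/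
/-!
Every permutation of length `n + 1` is `insertMin σ p` for exactly one pair of a permutation `σ` of
length `n` and a slot `p ∈ {0, …, n}`: insert a new smallest entry into slot `p`. If `σ` has `d`
descents, the result has `d` descents for the `d + 1` slots at the front or inside a descent, and
`d + 1` for the other `n - d` slots; this is the Eulerian recurrence.

A permutation avoids the mesh pattern iff, whenever `v + 1` stands to the right of `v`, some entry
larger than `v + 1` stands between them (`SuccSeparated`). `insertMin σ p` has this property iff `σ`
has it and `p` is not the slot just before the minimum of `σ`, a slot that keeps the descent count.
So the number `A(n, k)` of avoiders of length `n` with `k` descents satisfies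
`A(n + 1, k) = k A(n, k) + (n + 1 - k) A(n, k - 1)` for `n ≥ 1`, which is also the recurrence of
`E(n - 1, k - 1)`, `E` the Eulerian numbers; both agree for `n = 2`. Summing over `k` gives
`(n - 1)!`.
-/

open scoped Finset

namespace List

variable {α : Type*} [LinearOrder α]

def descentCount : List α → ℕ
  | a :: b :: l => (if b < a then 1 else 0) + descentCount (b :: l)
  | _ => 0

@[simp] lemma descentCount_nil : descentCount ([] : List α) = 0 := rfl

@[simp] lemma descentCount_singleton (a : α) : descentCount [a] = 0 := rfl

@[simp] lemma descentCount_cons_cons (a b : α) (l : List α) :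
    descentCount (a :: b :: l) = (if b < a then 1 else 0) + descentCount (b :: l) := rfl

lemma descentCount_le_length_sub_one (l : List α) : descentCount l ≤ l.length - 1 := by
  induction l with
  | nil => simp
  | cons a t ih =>
    cases t with
    | nil => simp
    | cons b t =>
      simp only [descentCount_cons_cons, length_cons] at ih ⊢
      split <;> omega

lemma descentCount_map {β : Type*} [LinearOrder β] {f : α → β} (hf : StrictMono f) (l : List α) :
    descentCount (l.map f) = descentCount l := by
  induction l with
  | nil => rfl
  | cons a t ih =>
    cases t with
    | nil => rfl
    | cons b t =>
      simp only [map_cons, descentCount_cons_cons, hf.lt_iff_lt] at ih ⊢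
      rw [ih]

lemma descentCount_ofFn {n : ℕ} (f : Fin (n + 1) → α) :
    descentCount (ofFn f) = ∑ i : Fin n, if f i.succ < f i.castSucc then 1 else 0 := by
  induction n with
  | zero => simp
  | succ n ih =>
    rw [ofFn_succ, ofFn_succ, descentCount_cons_cons, ← ofFn_succ (f := fun i => f i.succ), ih,
      Fin.sum_univ_succ]
    rfl

lemma ofFn_insertNth {β : Type*} {n : ℕ} (p : Fin (n + 1)) (x : β) (f : Fin n → β) :
    ofFn (Fin.insertNth p x f) = (ofFn f).insertIdx p x := by
  induction n with
  | zero => rw [Fin.fin_one_eq_zero p, Fin.insertNth_zero']; simp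
  | succ n ih =>
    cases p using Fin.cases with
    | zero => rw [Fin.insertNth_zero']; simp
    | succ p =>
      rw [← Fin.cons_self_tail f, Fin.insertNth_succ_cons, ofFn_cons, ofFn_cons, ih]
      rfl

variable {x : α}

lemma descentCount_insertIdx_zero (l : List α) (hx : ∀ y ∈ l, x < y) :
    descentCount (l.insertIdx 0 x) = descentCount l := by
  cases l with
  | nil => rfl
  | cons a t => simp [not_lt_of_gt (hx a (by simp))]

lemma descentCount_insertIdx_mem_Icc (l : List α) (hx : ∀ y ∈ l, x < y) (p : ℕ) :
    descentCount (l.insertIdx p x) ∈ Set.Icc (descentCount l) (descentCount l + 1) := by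
  induction l generalizing p with
  | nil => cases p <;> simp
  | cons a t ih =>
    have hxt : ∀ y ∈ t, x < y := fun y hy => hx y (mem_cons_of_mem a hy)
    rcases p with _ | _ | p
    · rw [descentCount_insertIdx_zero _ hx]
      exact ⟨le_rfl, Nat.le_succ _⟩
    · cases t with
      | nil => simp [hx a (by simp)]
      | cons b t =>
        simp only [insertIdx_succ_cons, insertIdx_zero, descentCount_cons_cons, hx a (by simp),
          not_lt_of_gt (hxt b (by simp)), ↓reduceIte, Set.mem_Icc]
        split <;> omega
    · cases t with
      | nil => simp
      | cons b t =>
        have := ih hxt (p + 1)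
        simp only [insertIdx_succ_cons, descentCount_cons_cons, Set.mem_Icc] at this ⊢
        omega

lemma card_filter_descentCount_insertIdx_eq (l : List α) (hx : ∀ y ∈ l, x < y) :
    #{p ∈ Finset.range (l.length + 1) | descentCount (l.insertIdx p x) = descentCount l} =
      descentCount l + 1 := by
  induction l with
  | nil => rfl
  | cons a t ih =>
    have hxt : ∀ y ∈ t, x < y := fun y hy => hx y (mem_cons_of_mem a hy)
    replace ih := ih hxt
    rw [Finset.card_filter] at ih ⊢
    rw [length_cons, Finset.sum_range_succ', if_pos (descentCount_insertIdx_zero _ hx)]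
    cases t with
    | nil => simp [hx a (by simp)]
    | cons b t =>
      have shift (p : ℕ) :
          descentCount ((a :: b :: t).insertIdx (p + 2) x) = descentCount (a :: b :: t) ↔
            descentCount ((b :: t).insertIdx (p + 1) x) = descentCount (b :: t) := by
        simp [insertIdx_succ_cons]
      have slot_one : descentCount ((a :: b :: t).insertIdx 1 x) = 1 + descentCount (b :: t) := by
        simp [hx a (by simp), not_lt_of_gt (hxt b (by simp))]
      rw [length_cons, Finset.sum_range_succ'] at ih ⊢
      rw [if_pos (descentCount_insertIdx_zero _ hxt)] at ih
      simp only [shift]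
      rw [zero_add, slot_one, descentCount_cons_cons]
      split_ifs <;> omega

lemma descentCount_insertIdx_of_getElem_lt (l : List α) (hx : ∀ y ∈ l, x < y) {q : ℕ}
    (hq : q + 1 < l.length) (hdesc : l[q + 1] < l[q]) :
    descentCount (l.insertIdx (q + 1) x) = descentCount l := by
  induction l generalizing q with
  | nil => simp at hq
  | cons a t ih =>
    cases t with
    | nil => simp at hq
    | cons b t =>
      have hxt : ∀ y ∈ b :: t, x < y := fun y hy => hx y (mem_cons_of_mem a hy)
      cases q with
      | zero =>
        simp only [getElem_cons_succ, getElem_cons_zero] at hdesc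
        simp [hx a (by simp), not_lt_of_gt (hxt b (by simp)), hdesc]
      | succ q =>
        have := ih hxt (q := q) (by simpa using hq) (by simpa using hdesc)
        simp only [insertIdx_succ_cons, descentCount_cons_cons] at this ⊢
        rw [this]

end List

open Equiv Finset

lemma descents_eq_descentCount {n : ℕ} (π : Perm (Fin n)) :
    descents π = (List.ofFn π).descentCount := by
  cases n with
  | zero => rfl
  | succ n =>
    rw [List.descentCount_ofFn, ← card_filter, descents]
    symm
    refine card_nbij (fun i => (i.castSucc, i.succ)) (fun i hi => by simpa using hi)
      (fun i _ j _ h => by simpa using congrArg Prod.fst h) ?_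
    rintro ⟨a, b⟩ hab
    simp only [coe_filter, mem_univ, true_and, Set.mem_ofPred_eq] at hab
    obtain ⟨hab, hlt⟩ := hab
    exact ⟨⟨a, by omega⟩, by simpa [Fin.ext_iff, hab] using hlt, by simp [hab]⟩

lemma descents_le {n : ℕ} (π : Perm (Fin n)) : descents π ≤ n - 1 := by
  simpa [descents_eq_descentCount] using List.descentCount_le_length_sub_one (List.ofFn π)

lemma pos_of_mem_map_succ {n : ℕ} (l : List (Fin n)) :
    ∀ y ∈ l.map Fin.succ, (0 : Fin (n + 1)) < y := by
  simp [Fin.succ_pos]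

section InsertMin

variable {n : ℕ}

def insertMin (σ : Perm (Fin n)) (p : Fin (n + 1)) : Perm (Fin (n + 1)) :=
  ((finSuccEquiv' p).trans σ.optionCongr).trans (finSuccEquiv' 0).symm

@[simp] lemma insertMin_apply_self (σ : Perm (Fin n)) (p : Fin (n + 1)) : insertMin σ p p = 0 := by
  simp [insertMin, finSuccEquiv'_at]

@[simp] lemma insertMin_apply_succAbove (σ : Perm (Fin n)) (p : Fin (n + 1)) (j : Fin n) :
    insertMin σ p (p.succAbove j) = (σ j).succ := by
  simp [insertMin, finSuccEquiv'_succAbove, finSuccEquiv'_symm_some]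

lemma coe_insertMin (σ : Perm (Fin n)) (p : Fin (n + 1)) :
    ⇑(insertMin σ p) = Fin.insertNth p 0 (Fin.succ ∘ σ) := by
  ext i
  cases i using Fin.succAboveCases p <;> simp

lemma insertMin_injective : Function.Injective (Function.uncurry (insertMin (n := n))) := by
  rintro ⟨σ, p⟩ ⟨σ', p'⟩ h
  simp only [Function.uncurry_apply_pair] at h
  obtain rfl : p = p' :=
    (insertMin σ' p').injective (by rw [insertMin_apply_self, ← h, insertMin_apply_self])
  refine Prod.ext (Equiv.ext fun j => Fin.succ_injective _ ?_) rfl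
  rw [← insertMin_apply_succAbove, ← insertMin_apply_succAbove, h]

lemma insertMin_bijective : Function.Bijective (Function.uncurry (insertMin (n := n))) :=
  (Fintype.bijective_iff_injective_and_card _).mpr
    ⟨insertMin_injective, by simp [Fintype.card_perm, Nat.factorial_succ, mul_comm]⟩

lemma descentCount_map_succ_ofFn (σ : Perm (Fin n)) :
    ((List.ofFn σ).map Fin.succ).descentCount = descents σ := by
  rw [descents_eq_descentCount, List.descentCount_map Fin.strictMono_succ]

lemma descents_insertMin (σ : Perm (Fin n)) (p : Fin (n + 1)) :
    descents (insertMin σ p) = (((List.ofFn σ).map Fin.succ).insertIdx p 0).descentCount := by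
  rw [descents_eq_descentCount, coe_insertMin, List.ofFn_insertNth, List.map_ofFn]

lemma descents_insertMin_mem_Icc (σ : Perm (Fin n)) (p : Fin (n + 1)) :
    descents (insertMin σ p) ∈ Set.Icc (descents σ) (descents σ + 1) := by
  rw [descents_insertMin, ← descentCount_map_succ_ofFn]
  exact List.descentCount_insertIdx_mem_Icc _ (pos_of_mem_map_succ _) p

lemma card_filter_descents_insertMin_eq (σ : Perm (Fin n)) :
    #{p | descents (insertMin σ p) = descents σ} = descents σ + 1 := by
  have := List.card_filter_descentCount_insertIdx_eq _ (pos_of_mem_map_succ (List.ofFn σ))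
  simp only [List.length_map, List.length_ofFn, descentCount_map_succ_ofFn] at this
  rw [← this, card_filter, card_filter]
  simp only [descents_insertMin]
  exact Fin.sum_univ_eq_sum_range (fun p =>
    if (((List.ofFn σ).map Fin.succ).insertIdx p 0).descentCount = descents σ then 1 else 0) (n + 1)

lemma card_filter_descents_insertMin_succ (σ : Perm (Fin n)) :
    #{p | descents (insertMin σ p) = descents σ + 1} = n - descents σ := by
  have hsplit := card_filter_add_card_filter_not (s := univ)
    fun p : Fin (n + 1) => descents (insertMin σ p) = descents σ
  rw [card_filter_descents_insertMin_eq, card_univ, Fintype.card_fin] at hsplit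
  have hcompl : #{p | descents (insertMin σ p) = descents σ + 1} =
      #{p | ¬descents (insertMin σ p) = descents σ} := by
    congr 1
    refine filter_congr fun p _ => ?_
    obtain ⟨h₁, h₂⟩ := descents_insertMin_mem_Icc σ p
    omega
  omega

lemma card_filter_descents_insertMin (σ : Perm (Fin n)) (s : Finset (Fin (n + 1))) (k : ℕ) :
    #{p ∈ s | descents (insertMin σ p) = k} =
      (if descents σ = k then #{p ∈ s | descents (insertMin σ p) = descents σ} else 0) +
      (if descents σ + 1 = k then #{p ∈ s | descents (insertMin σ p) = descents σ + 1} else 0) := by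
  by_cases h₀ : descents σ = k
  · subst h₀; simp
  by_cases h₁ : descents σ + 1 = k
  · subst h₁; simp
  rw [if_neg h₀, if_neg h₁, card_eq_zero, filter_eq_empty_iff]
  intro p _ hp
  obtain ⟨h₂, h₃⟩ := descents_insertMin_mem_Icc σ p
  omega

lemma descents_insertMin_castSucc_symm_zero (σ : Perm (Fin (n + 1))) :
    descents (insertMin σ (σ.symm 0).castSucc) = descents σ := by
  rw [descents_insertMin, ← descentCount_map_succ_ofFn]
  rcases Fin.eq_zero_or_eq_succ (σ.symm 0) with h | ⟨q, hq⟩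
  · rw [h]
    exact List.descentCount_insertIdx_zero _ (pos_of_mem_map_succ _)
  · rw [hq]
    refine List.descentCount_insertIdx_of_getElem_lt _ (pos_of_mem_map_succ _) (by simp) ?_
    have hmin : σ q.succ = 0 := by rw [← hq, apply_symm_apply]
    have hne : σ q.castSucc ≠ 0 := fun h =>
      Fin.castSucc_lt_succ.ne (σ.injective (h.trans hmin.symm))
    simp only [List.getElem_map, List.getElem_ofFn, Fin.succ_lt_succ_iff]
    change σ q.succ < σ q.castSucc
    rw [hmin]
    exact Fin.pos_iff_ne_zero.mpr hne

end InsertMin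

def SeparatedAt {m : ℕ} (π : Perm (Fin m)) (i j : Fin m) : Prop :=
  i < j → (π j : ℕ) = π i + 1 → ∃ z, i < z ∧ z < j ∧ π j < π z

def SuccSeparated {m : ℕ} (π : Perm (Fin m)) : Prop :=
  ∀ i j, SeparatedAt π i j

instance {m : ℕ} : DecidablePred (SuccSeparated (m := m)) := fun π => by
  unfold SuccSeparated SeparatedAt
  infer_instance

lemma succSeparated_fin_one (σ : Perm (Fin 1)) : SuccSeparated σ :=
  fun i j hij => absurd hij (by simp [Subsingleton.elim i j])

lemma Fin.val_eq_val_add_one_iff {m : ℕ} (a b : Fin m) :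
    (b : ℕ) = a + 1 ↔ a < b ∧ ∀ c, a < c → b ≤ c := by
  constructor
  · intro h
    refine ⟨Fin.lt_def.mpr (by omega), fun c hc => Fin.le_def.mpr ?_⟩
    rw [Fin.lt_def] at hc
    omega
  · rintro ⟨hab, hmin⟩
    rw [Fin.lt_def] at hab
    have := Fin.le_def.mp (hmin ⟨a + 1, by omega⟩ (Fin.lt_def.mpr (Nat.lt_succ_self _)))
    dsimp only at this
    omega

lemma meshOccursIn_iff_s6 {m : ℕ} (π : Perm (Fin m)) :
    MeshOccursIn (1 : Perm (Fin 2)) {(0,1),(1,1),(1,2),(2,1)} π ↔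
      ∃ i j, i < j ∧ (π j : ℕ) = π i + 1 ∧ ∀ z, i < z → z < j → π z ≤ π j := by
  have boxes : MeshOccursIn (1 : Perm (Fin 2)) {(0,1),(1,1),(1,2),(2,1)} π ↔
      ∃ i j, i < j ∧ (π i < π j ∧ π i ≤ π j) ∧ (∀ z < i, π i < π z → π j ≤ π z) ∧
        (∀ z, i < z → z < j → π i < π z → π j ≤ π z) ∧ (∀ z, i < z → z < j → π z ≤ π j) ∧
        ∀ z, j < z → π i < π z → π j ≤ π z := by
    simp only [MeshOccursIn, Set.forall_mem_insert, Set.mem_singleton_iff, forall_eq]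
    simp [posOf, valOf, Fin.forall_fin_two, Fin.strictMono_iff_lt_succ, Fin.exists_fin_succ_pi,
      Perm.one_def]
  rw [boxes]
  refine exists₂_congr fun i j => ?_
  rw [Fin.val_eq_val_add_one_iff, π.surjective.forall (p := fun c => π i < c → π j ≤ c)]
  constructor
  · rintro ⟨hij, ⟨hlt, -⟩, below, between, guard, above⟩
    refine ⟨hij, ⟨hlt, fun z hz => ?_⟩, guard⟩
    rcases lt_trichotomy z i with hzi | rfl | hiz
    · exact below z hzi hz
    · exact absurd hz (lt_irrefl _)
    rcases lt_trichotomy z j with hzj | rfl | hjz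
    · exact between z hiz hzj hz
    · exact le_rfl
    · exact above z hjz hz
  · rintro ⟨hij, ⟨hlt, hmin⟩, guard⟩
    exact ⟨hij, ⟨hlt, hlt.le⟩, fun z _ => hmin z, fun z _ _ => hmin z, guard, fun z _ => hmin z⟩

lemma meshAvoids_iff_succSeparated {m : ℕ} (π : Perm (Fin m)) :
    MeshAvoids (1 : Perm (Fin 2)) {(0,1),(1,1),(1,2),(2,1)} π ↔ SuccSeparated π := by
  simp only [MeshAvoids, meshOccursIn_iff_s6, SuccSeparated, SeparatedAt, not_exists, not_and,
    not_forall, not_le, exists_prop]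

section InsertMin

variable {n : ℕ}

lemma separatedAt_insertMin_succAbove (σ : Perm (Fin n)) (p : Fin (n + 1)) (i j : Fin n) :
    SeparatedAt (insertMin σ p) (p.succAbove i) (p.succAbove j) ↔ SeparatedAt σ i j := by
  have hz : (∃ z, p.succAbove i < z ∧ z < p.succAbove j ∧ (σ j).succ < insertMin σ p z) ↔
      ∃ w, i < w ∧ w < j ∧ σ j < σ w := by
    rw [Fin.exists_iff_succAbove p]
    simp [Fin.succAbove_lt_succAbove_iff]
  simp only [SeparatedAt, insertMin_apply_succAbove, Fin.succAbove_lt_succAbove_iff, Fin.val_succ,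
    Nat.add_right_cancel_iff, hz]

lemma separatedAt_insertMin_self_right (σ : Perm (Fin n)) (p i : Fin (n + 1)) :
    SeparatedAt (insertMin σ p) i p := by
  intro _ h
  simp at h

lemma forall_separatedAt_insertMin_self_left (σ : Perm (Fin (n + 1))) (p : Fin (n + 2)) :
    (∀ j, SeparatedAt (insertMin σ p) p j) ↔ p ≠ (σ.symm 0).castSucc := by
  set m := σ.symm 0
  have hσm : σ m = 0 := σ.apply_symm_apply 0
  have value_zero (z) : insertMin σ p z = 0 ↔ z = p := by
    rw [← insertMin_apply_self σ p, (insertMin σ p).injective.eq_iff]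
  have value_one (z) : ((insertMin σ p z : Fin (n + 2)) : ℕ) = 1 ↔ z = p.succAbove m := by
    rw [← (insertMin σ p).injective.eq_iff, insertMin_apply_succAbove, hσm, Fin.ext_iff]
    simp
  constructor
  · rintro h rfl
    obtain ⟨z, hz₁, hz₂, -⟩ := h m.succ Fin.castSucc_lt_succ
      (by simp [(value_one _).mpr (Fin.succAbove_castSucc_self m).symm])
    rw [Fin.lt_def, Fin.val_castSucc] at hz₁
    rw [Fin.lt_def, Fin.val_succ] at hz₂
    omega
  · intro hne j hpj hj
    rw [insertMin_apply_self, Fin.val_zero, zero_add, value_one] at hj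
    subst hj
    have hpm : p < m.castSucc :=
      lt_of_le_of_ne ((Fin.lt_succAbove_iff_le_castSucc p m).mp hpj) hne
    rw [Fin.succAbove_of_le_castSucc _ _ hpm.le] at value_one ⊢
    rw [Fin.lt_def, Fin.val_castSucc] at hpm
    set z : Fin (n + 2) := ⟨p + 1, by omega⟩
    have hzv : (z : ℕ) = p + 1 := rfl
    have hz₀ : ((insertMin σ p z : Fin (n + 2)) : ℕ) ≠ 0 := fun h => by
      have := congrArg Fin.val ((value_zero z).mp (Fin.ext h))
      omega
    have hz₁ : ((insertMin σ p z : Fin (n + 2)) : ℕ) ≠ 1 := fun h => by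
      have := congrArg Fin.val ((value_one z).mp h)
      rw [Fin.val_succ] at this
      omega
    refine ⟨z, Fin.lt_def.mpr (by omega), Fin.lt_def.mpr (by rw [Fin.val_succ]; omega), ?_⟩
    rw [Fin.lt_def, (value_one _).mpr rfl]
    omega

lemma succSeparated_insertMin_iff (σ : Perm (Fin (n + 1))) (p : Fin (n + 2)) :
    SuccSeparated (insertMin σ p) ↔ SuccSeparated σ ∧ p ≠ (σ.symm 0).castSucc := by
  have row (i : Fin (n + 1)) :
      (∀ j, SeparatedAt (insertMin σ p) (p.succAbove i) j) ↔ ∀ j, SeparatedAt σ i j := by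
    rw [Fin.forall_iff_succAbove p]
    simp only [separatedAt_insertMin_self_right, separatedAt_insertMin_succAbove, true_and]
  rw [SuccSeparated, Fin.forall_iff_succAbove p, forall_separatedAt_insertMin_self_left]
  simp only [row, SuccSeparated, and_comm]

end InsertMin

lemma card_filter_eq_sum_card_filter_of_bijective {α β γ : Type*} [Fintype α] [Fintype β]
    [Fintype γ] {f : α → β → γ} (hf : Function.Bijective (Function.uncurry f)) (P : γ → Prop)
    [DecidablePred P] : #{c | P c} = ∑ a, #{b | P (f a b)} := by
  simp only [card_filter, ← (Equiv.ofBijective _ hf).sum_comp, Fintype.sum_prod_type]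
  rfl

lemma sum_ite_const_eq_mul_card {α : Type*} (s : Finset α) (P : α → Prop) [DecidablePred P]
    (c : ℕ) : ∑ a ∈ s, (if P a then c else 0) = c * #{a ∈ s | P a} := by
  rw [sum_ite, sum_const, sum_const_zero, smul_eq_mul, add_zero, mul_comm]

lemma card_descents_recurrence (n k : ℕ) :
    #{π : Perm (Fin (n + 1)) | descents π = k} =
      (k + 1) * #{σ : Perm (Fin n) | descents σ = k} +
      (n + 1 - k) * #{σ : Perm (Fin n) | descents σ + 1 = k} := by
  have fiber (σ : Perm (Fin n)) : #{p | descents (insertMin σ p) = k} =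
      (if descents σ = k then k + 1 else 0) + (if descents σ + 1 = k then n + 1 - k else 0) := by
    rw [card_filter_descents_insertMin σ univ k, card_filter_descents_insertMin_eq,
      card_filter_descents_insertMin_succ]
    split_ifs <;> omega
  rw [card_filter_eq_sum_card_filter_of_bijective insertMin_bijective,
    sum_congr rfl fun σ _ => fiber σ, sum_add_distrib, sum_ite_const_eq_mul_card,
    sum_ite_const_eq_mul_card]

lemma card_succSeparated_descents_recurrence (n k : ℕ) :
    #{π : Perm (Fin (n + 2)) | SuccSeparated π ∧ descents π = k} =
      k * #{σ : Perm (Fin (n + 1)) | SuccSeparated σ ∧ descents σ = k} +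
      (n + 2 - k) * #{σ : Perm (Fin (n + 1)) | SuccSeparated σ ∧ descents σ + 1 = k} := by
  have fiber (σ : Perm (Fin (n + 1))) :
      #{p | SuccSeparated (insertMin σ p) ∧ descents (insertMin σ p) = k} =
        (if SuccSeparated σ ∧ descents σ = k then k else 0) +
        (if SuccSeparated σ ∧ descents σ + 1 = k then n + 2 - k else 0) := by
    simp only [succSeparated_insertMin_iff]
    by_cases hσ : SuccSeparated σ
    · set bad := (σ.symm 0).castSucc
      have hbad := descents_insertMin_castSucc_symm_zero σ
      have hfilter :
          ({p | (SuccSeparated σ ∧ p ≠ bad) ∧ descents (insertMin σ p) = k} : Finset _) =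
            {p ∈ univ.erase bad | descents (insertMin σ p) = k} := by
        ext p
        simp [hσ]
      rw [hfilter, card_filter_descents_insertMin σ _ k, filter_erase, filter_erase,
        card_erase_of_mem (by simp [bad, hbad]), erase_eq_of_notMem (by simp [bad, hbad]),
        card_filter_descents_insertMin_eq, card_filter_descents_insertMin_succ]
      simp only [hσ, true_and]
      split_ifs <;> omega
    · simp [hσ]
  rw [card_filter_eq_sum_card_filter_of_bijective insertMin_bijective,
    sum_congr rfl fun σ _ => fiber σ, sum_add_distrib, sum_ite_const_eq_mul_card,
    sum_ite_const_eq_mul_card]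

lemma card_succSeparated_descents_eq (m k : ℕ) :
    #{π : Perm (Fin (m + 2)) | SuccSeparated π ∧ descents π = k} =
      #{σ : Perm (Fin (m + 1)) | descents σ + 1 = k} := by
  induction m generalizing k with
  | zero =>
    have hd (σ : Perm (Fin 1)) : descents σ = 0 := Nat.le_zero.mp (descents_le σ)
    rw [card_succSeparated_descents_recurrence]
    rcases k with _ | _ | k <;> simp [hd, succSeparated_fin_one]
  | succ m ih =>
    rw [card_succSeparated_descents_recurrence, ih]
    rcases k with _ | j
    · simp
    · simp only [Nat.add_right_cancel_iff]
      rw [ih, card_descents_recurrence (m + 1) j]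
      congr 2
      omega

lemma card_succSeparated_eq_factorial (m : ℕ) :
    #{π : Perm (Fin (m + 2)) | SuccSeparated π} = (m + 1).factorial := by
  have hπ : ∀ π ∈ ({π | SuccSeparated π} : Finset (Perm (Fin (m + 2)))),
      descents π ∈ range (m + 2) :=
    fun π _ => mem_range.mpr (by have := descents_le π; omega)
  have hσ : ∀ σ ∈ (univ : Finset (Perm (Fin (m + 1)))), descents σ + 1 ∈ range (m + 2) :=
    fun σ _ => mem_range.mpr (by have := descents_le σ; omega)
  rw [card_eq_sum_card_fiberwise hπ, ← Fintype.card_fin (m + 1), ← Fintype.card_perm, ← card_univ,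
    card_eq_sum_card_fiberwise hσ]
  simp only [filter_filter, card_succSeparated_descents_eq]


/-- For `n ≥ 2` and every `k`, the number of permutations of
length `n` avoiding `(12, {(0,1),(1,1),(1,2),(2,1)})` with exactly `k` descents equals the number of
permutations of length `n-1` with exactly `k-1` descents (stated as
`descents σ + 1 = k`, so that `k = 0` gives the empty count on both sides).
In particular the number of avoiders of length `n ≥ 1` is `(n-1)!`. -/
theorem stmt6 :
    (∀ n : ℕ, 2 ≤ n → ∀ k : ℕ,
      Nat.card {π : Equiv.Perm (Fin n) //
        MeshAvoids (1 : Equiv.Perm (Fin 2)) {(0,1),(1,1),(1,2),(2,1)} π ∧ descents π = k} =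
      Nat.card {σ : Equiv.Perm (Fin (n - 1)) // descents σ + 1 = k}) ∧
    ∀ n : ℕ, 1 ≤ n →
      Nat.card {π : Equiv.Perm (Fin n) //
        MeshAvoids (1 : Equiv.Perm (Fin 2)) {(0,1),(1,1),(1,2),(2,1)} π} = (n - 1).factorial := by
  simp only [meshAvoids_iff_succSeparated, Nat.card_eq_fintype_card, Fintype.card_subtype]
  refine ⟨fun n hn k => ?_, fun n hn => ?_⟩
  · obtain ⟨m, rfl⟩ := Nat.exists_eq_add_of_le' hn
    exact card_succSeparated_descents_eq m k
  · rcases n with _ | _ | m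
    · omega
    · simp [succSeparated_fin_one]
    · exact card_succSeparated_eq_factorial m
end

section
/- Let a_n be the number of permutations of length n avoiding the mesh pattern (12, {(0,1),(0,2),(1,0),(1,1),(1,2)}). Then a_0 = a_1 = 1 and a_n = (n−1)·a_{n−1} + (n−2)·a_{n−2} for all n ≥ 2. -/
/-
An occurrence of the pattern is a left-to-right maximum `π i` immediately followed by a larger
entry: the fully shaded column 1 forces the two entries to be adjacent, and the boxes `(0,1)`,
`(0,2)` say that nothing to the left of `π i` exceeds it. Encode `π` by its inversion sequence
`e i = #{j < i | π i < π j} ∈ [0, i]`, a bijection with `∏ [0, i]`. Left-to-right maxima are the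
zeros of `e`, and a left-to-right maximum followed by an ascent is a pair of adjacent zeros.
Sorting the inversion sequences of length `n` without adjacent zeros by their last entry gives
the recurrence: a nonzero last entry can be appended to any such sequence of length `n - 1` in
`n - 1` ways, while a last entry `0` must be preceded by a nonzero one, which in turn can be
appended to any such sequence of length `n - 2` in `n - 2` ways.
-/

open Finset

namespace Equiv.Perm

variable {n : ℕ}

def IsLTRMax (π : Perm (Fin n)) (i : Fin n) : Prop := ∀ j < i, π j < π i

def leftInvCount (π : Perm (Fin n)) (i : Fin n) : ℕ := #{j | j < i ∧ π i < π j}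

lemma leftInvCount_le (π : Perm (Fin n)) (i : Fin n) : leftInvCount π i ≤ i :=
  calc leftInvCount π i ≤ #(Iio i) := card_le_card fun j hj => by simp_all
    _ = i := Fin.card_Iio i

lemma apply_lt_apply_iff_not_lt {π : Perm (Fin n)} {i j : Fin n} (hij : i ≠ j) :
    π i < π j ↔ ¬ π j < π i :=
  ⟨fun h => h.asymm, fun h => (not_lt.1 h).lt_of_ne (π.injective.ne hij)⟩

lemma leftInvCount_eq_zero_iff (π : Perm (Fin n)) (i : Fin n) :
    leftInvCount π i = 0 ↔ IsLTRMax π i := by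
  simp only [leftInvCount, card_eq_zero, filter_eq_empty_iff, mem_univ, true_implies, not_and,
    IsLTRMax]
  exact forall₂_congr fun j hj => (apply_lt_apply_iff_not_lt hj.ne).symm

/-- Reads the comparison of `π i` with an earlier entry off `leftInvCount π i` and the relative
order of the earlier entries; this is why `leftInvCount π` determines `π`. -/
lemma lt_iff_card_lt_leftInvCount (π : Perm (Fin n)) {i j : Fin n} (hji : j < i) :
    π i < π j ↔ #{l | l < i ∧ π j < π l} < leftInvCount π i := by
  constructor
  · intro h
    refine card_lt_card ⟨fun l hl => ?_, fun hsub => ?_⟩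
    · simp only [mem_filter, mem_univ, true_and] at hl ⊢
      exact ⟨hl.1, h.trans hl.2⟩
    · simpa using hsub (by simpa using ⟨hji, h⟩ : j ∈ ({l | l < i ∧ π i < π l} : Finset _))
  · rw [apply_lt_apply_iff_not_lt hji.ne']
    refine fun hcard h => hcard.not_ge (card_le_card fun l hl => ?_)
    simp only [mem_filter, mem_univ, true_and] at hl ⊢
    exact ⟨hl.1, h.trans hl.2⟩

lemma val_eq_card_lt (π : Perm (Fin n)) (i : Fin n) : (π i : ℕ) = #{j | π j < π i} := by
  rw [← Fin.card_Iio]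
  exact (card_equiv π fun j => by simp).symm

lemma apply_lt_apply_iff_of_leftInvCount_eq {π σ : Perm (Fin n)}
    (h : ∀ i, leftInvCount π i = leftInvCount σ i) (a b : Fin n) : π a < π b ↔ σ a < σ b := by
  suffices ∀ m : ℕ, ∀ a b : Fin n, (a : ℕ) < m → (b : ℕ) < m → (π a < π b ↔ σ a < σ b) from
    this n a b a.2 b.2
  intro m
  induction m with
  | zero => intro a b ha; omega
  | succ m ih =>
    have last : ∀ a b : Fin n, (a : ℕ) = m → b < a → (π a < π b ↔ σ a < σ b) := by
      intro a b ha hba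
      have hb : (b : ℕ) < m := ha ▸ Fin.lt_def.1 hba
      rw [lt_iff_card_lt_leftInvCount π hba, lt_iff_card_lt_leftInvCount σ hba, h,
        filter_congr fun l _ => and_congr_right fun hl => ih b l hb (ha ▸ Fin.lt_def.1 hl)]
    intro a b ha hb
    rcases lt_trichotomy a b with hab | rfl | hab
    · rcases (by omega : (b : ℕ) = m ∨ (b : ℕ) < m) with hbm | hbm
      · rw [apply_lt_apply_iff_not_lt (π := π) hab.ne, apply_lt_apply_iff_not_lt (π := σ) hab.ne,
          last b a hbm hab]
      · exact ih a b ((Fin.lt_def.1 hab).trans hbm) hbm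
    · exact iff_of_false (lt_irrefl _) (lt_irrefl _)
    · rcases (by omega : (a : ℕ) = m ∨ (a : ℕ) < m) with ham | ham
      · exact last a b ham hab
      · exact ih a b ham ((Fin.lt_def.1 hab).trans ham)

lemma eq_of_leftInvCount_eq {π σ : Perm (Fin n)} (h : ∀ i, leftInvCount π i = leftInvCount σ i) :
    π = σ := by
  ext i
  rw [val_eq_card_lt, val_eq_card_lt]
  congr 1
  exact filter_congr fun j _ => apply_lt_apply_iff_of_leftInvCount_eq h j i

end Equiv.Perm

abbrev InversionSeq (n : ℕ) := ∀ i : Fin n, Fin (i + 1)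

lemma card_inversionSeq (n : ℕ) : Fintype.card (InversionSeq n) = n.factorial := by
  simp only [Fintype.card_pi, Fintype.card_fin]
  exact (Fin.prod_univ_eq_prod_range (· + 1) n).trans (prod_range_add_one_eq_factorial n)

def NoAdjacentZeros {n : ℕ} (e : InversionSeq n) : Prop :=
  ∀ i j : Fin n, (j : ℕ) = i + 1 → (e i : ℕ) = 0 → (e j : ℕ) ≠ 0

namespace Equiv.Perm

variable {n : ℕ}

def toInversionSeq (π : Perm (Fin n)) : InversionSeq n :=
  fun i => ⟨leftInvCount π i, Nat.lt_succ_of_le (leftInvCount_le π i)⟩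

lemma val_toInversionSeq (π : Perm (Fin n)) (i : Fin n) :
    (toInversionSeq π i : ℕ) = leftInvCount π i :=
  rfl

lemma toInversionSeq_bijective : Function.Bijective (toInversionSeq (n := n)) := by
  refine (Fintype.bijective_iff_injective_and_card _).2 ⟨fun π σ h => ?_, ?_⟩
  · exact eq_of_leftInvCount_eq fun i => congrArg Fin.val (congrFun h i)
  · rw [Fintype.card_perm, Fintype.card_fin, card_inversionSeq]

noncomputable def inversionSeqEquiv : Perm (Fin n) ≃ InversionSeq n :=
  .ofBijective _ toInversionSeq_bijective

lemma IsLTRMax.isLTRMax_iff_lt {π : Perm (Fin n)} {i j : Fin n} (hi : IsLTRMax π i)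
    (hij : (j : ℕ) = i + 1) : IsLTRMax π j ↔ π i < π j := by
  refine ⟨fun hj => hj i (Fin.lt_def.2 (by omega)), fun h l hl => ?_⟩
  rcases (by rw [Fin.lt_def] at hl; omega : l = i ∨ l < i) with rfl | hli
  · exact h
  · exact (hi l hli).trans h

lemma meshOccursIn_iff_exists_isLTRMax_lt_succ (π : Perm (Fin n)) :
    MeshOccursIn (1 : Perm (Fin 2)) {(0,1),(0,2),(1,0),(1,1),(1,2)} π ↔
      ∃ i j : Fin n, (j : ℕ) = i + 1 ∧ IsLTRMax π i ∧ π i < π j := by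
  simp only [MeshOccursIn, posOf, valOf, Set.mem_insert_iff, Set.mem_singleton_iff,
    forall_eq_or_imp, forall_eq]
  simp only [coe_one, id_eq, Fin.forall_fin_two, not_lt_zero, iff_false, not_lt, Fin.lt_one_iff,
    Nat.reduceAdd, Std.le_refl, iff_true, true_and, one_ne_zero, and_true, zero_le, ↓reduceDIte,
    ↓reduceIte, Order.lt_add_one_iff, Order.add_one_le_iff, Fin.val_fin_lt, ← inv_def,
    Nat.add_one_sub_one, not_and, Nat.reduceLeDiff, OfNat.ofNat_ne_zero, Fin.is_lt]
  constructor
  · rintro ⟨x, hx, ⟨hlt, -⟩, h01, h02, h10, h11, h12⟩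
    have hx01 : x 0 < x 1 := hx (show (0 : Fin 2) < 1 by decide)
    have no_between : ∀ z, x 0 < z → z < x 1 → False := fun z h0 h1 =>
      h1.ne (π.injective (le_antisymm (h12 z h0 h1)
        (h11 z h0 h1 ((h10 z h0 h1).lt_of_ne (π.injective.ne h0.ne)))))
    have adjacent : (x 1 : ℕ) = x 0 + 1 := by
      by_contra hne
      have h0 : (x 0 : ℕ) < x 1 := Fin.lt_def.1 hx01
      exact no_between ⟨x 0 + 1, by omega⟩ (Fin.lt_def.2 (Nat.lt_succ_self _))
        (Fin.lt_def.2 (by change (x 0 : ℕ) + 1 < x 1; omega))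
    refine ⟨x 0, x 1, adjacent, fun z hz => lt_of_not_ge fun hle => ?_, hlt⟩
    have hz1 : π z = π (x 1) :=
      le_antisymm (h02 z hz) (h01 z hz (hle.lt_of_ne (π.injective.ne hz.ne')))
    exact (hz.trans hx01).ne (π.injective hz1)
  · rintro ⟨i, j, hij, hi, hlt⟩
    have no_between : ∀ z, i < z → z < j → False := fun z h0 h1 => by
      rw [Fin.lt_def] at h0 h1
      omega
    refine ⟨![i, j], by simpa using Fin.lt_def.2 (by omega), ⟨hlt, hlt.le⟩,
      fun z hz h => absurd h (hi z hz).not_gt, fun z hz => ((hi z hz).trans hlt).le,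
      fun z h0 h1 => (no_between z h0 h1).elim, fun z h0 h1 => (no_between z h0 h1).elim,
      fun z h0 h1 => (no_between z h0 h1).elim⟩

lemma meshAvoids_iff_noAdjacentZeros (π : Perm (Fin n)) :
    MeshAvoids (1 : Perm (Fin 2)) {(0,1),(0,2),(1,0),(1,1),(1,2)} π ↔
      NoAdjacentZeros (toInversionSeq π) := by
  simp only [MeshAvoids, meshOccursIn_iff_exists_isLTRMax_lt_succ, NoAdjacentZeros,
    val_toInversionSeq, leftInvCount_eq_zero_iff, not_exists, not_and, ne_eq]
  exact forall₃_congr fun i j hij => forall_congr' fun hi =>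
    not_congr (hi.isLTRMax_iff_lt hij).symm

end Equiv.Perm

lemma noAdjacentZeros_snoc_iff {n : ℕ} (e : InversionSeq n) (v : Fin (n + 1)) :
    NoAdjacentZeros (Fin.snoc (α := fun i : Fin (n + 1) => Fin (i + 1)) e v) ↔
      NoAdjacentZeros e ∧ ∀ i : Fin n, (i : ℕ) + 1 = n → (e i : ℕ) = 0 → (v : ℕ) ≠ 0 := by
  simp only [NoAdjacentZeros, Fin.forall_fin_succ', Fin.snoc_castSucc, Fin.snoc_last,
    Fin.val_castSucc, Fin.val_last]
  exact ⟨fun ⟨h, _⟩ => ⟨fun i => (h i).1, fun i hi => (h i).2 hi.symm⟩,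
    fun ⟨h, hv⟩ => ⟨fun i => ⟨h i, fun hi => hv i hi.symm⟩, fun i hi => by omega, by omega⟩⟩

lemma Nat.card_subtype_eq_card_and_add_card_and_not {α : Type*} [Finite α] (p q : α → Prop) :
    Nat.card {a // p a} = Nat.card {a // p a ∧ q a} + Nat.card {a // p a ∧ ¬ q a} := by
  classical
  rw [← Nat.card_sum]
  exact Nat.card_congr <| (Equiv.sumCompl fun a : {a // p a} => q a).symm.trans <|
    (Equiv.subtypeSubtypeEquivSubtypeInter p q).sumCongr
      (Equiv.subtypeSubtypeEquivSubtypeInter p fun a => ¬ q a)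

lemma card_inversionSeq_snoc_eq_mul {n : ℕ} {P : InversionSeq (n + 1) → Prop}
    (Q : Fin (n + 1) → Prop) (R : InversionSeq n → Prop)
    (h : ∀ e v, P (Fin.snoc (α := fun i : Fin (n + 1) => Fin (i + 1)) e v) ↔ Q v ∧ R e) :
    Nat.card {e // P e} = Nat.card {v // Q v} * Nat.card {e // R e} := by
  rw [← Nat.card_prod]
  exact Nat.card_congr <|
    (Equiv.subtypeEquiv (Fin.snocEquiv _) fun p => (h p.2 p.1).symm).symm.trans
      Equiv.subtypeProdEquivProd

noncomputable def countNoAdjacentZeros (n : ℕ) : ℕ :=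
  Nat.card {e : InversionSeq n // NoAdjacentZeros e}

lemma card_noAdjacentZeros_last_ne_zero (n : ℕ) :
    Nat.card {e : InversionSeq (n + 1) // NoAdjacentZeros e ∧ (e (Fin.last n) : ℕ) ≠ 0} =
      n * countNoAdjacentZeros n := by
  rw [card_inversionSeq_snoc_eq_mul (fun v => (v : ℕ) ≠ 0) NoAdjacentZeros, countNoAdjacentZeros]
  · simp [Nat.card_eq_fintype_card, Fintype.card_subtype_compl, Fin.val_eq_zero_iff]
  · intro e v
    rw [noAdjacentZeros_snoc_iff, Fin.snoc_last]
    exact ⟨fun h => ⟨h.2, h.1.1⟩, fun h => ⟨⟨h.2, fun _ _ _ => h.1⟩, h.1⟩⟩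

lemma card_noAdjacentZeros_last_eq_zero (n : ℕ) :
    Nat.card {e : InversionSeq (n + 2) // NoAdjacentZeros e ∧ (e (Fin.last (n + 1)) : ℕ) = 0} =
      n * countNoAdjacentZeros n := by
  rw [card_inversionSeq_snoc_eq_mul (fun v => (v : ℕ) = 0)
    (fun e => NoAdjacentZeros e ∧ (e (Fin.last n) : ℕ) ≠ 0), card_noAdjacentZeros_last_ne_zero]
  · simp [Fin.val_eq_zero_iff]
  · intro e v
    rw [noAdjacentZeros_snoc_iff, Fin.snoc_last]
    refine ⟨fun ⟨⟨h, hlast⟩, hv⟩ => ⟨hv, h, fun h0 => hlast (Fin.last n) rfl h0 hv⟩,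
      fun ⟨hv, h, hne⟩ => ⟨⟨h, fun i hi h0 => ?_⟩, hv⟩⟩
    obtain rfl : i = Fin.last n := Fin.ext (by simp only [Fin.val_last]; omega)
    exact absurd h0 hne

lemma countNoAdjacentZeros_add_two (n : ℕ) :
    countNoAdjacentZeros (n + 2) =
      (n + 1) * countNoAdjacentZeros (n + 1) + n * countNoAdjacentZeros n := by
  rw [countNoAdjacentZeros, Nat.card_subtype_eq_card_and_add_card_and_not _
    fun e : InversionSeq (n + 2) => (e (Fin.last (n + 1)) : ℕ) ≠ 0,
    card_noAdjacentZeros_last_ne_zero]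
  simp only [not_not]
  rw [card_noAdjacentZeros_last_eq_zero]

lemma countNoAdjacentZeros_of_le_one {n : ℕ} (hn : n ≤ 1) : countNoAdjacentZeros n = 1 := by
  have all : ∀ e : InversionSeq n, NoAdjacentZeros e := fun e i j hij => by omega
  rw [countNoAdjacentZeros, Nat.card_congr (Equiv.subtypeUnivEquiv all), Nat.card_eq_fintype_card,
    card_inversionSeq, Nat.factorial_eq_one.2 hn]

/-- The number `a n` of permutations of length `n` avoiding
`(12, {(0,1),(0,2),(1,0),(1,1),(1,2)})` satisfies `a 0 = a 1 = 1` and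
`a n = (n-1)·a (n-1) + (n-2)·a (n-2)` for `n ≥ 2`. -/
theorem stmt9 (a : ℕ → ℕ)
    (ha : ∀ n, a n = Nat.card {π : Equiv.Perm (Fin n) //
      MeshAvoids (1 : Equiv.Perm (Fin 2)) {(0,1),(0,2),(1,0),(1,1),(1,2)} π}) :
    a 0 = 1 ∧ a 1 = 1 ∧
      ∀ n, 2 ≤ n → a n = (n - 1) * a (n - 1) + (n - 2) * a (n - 2) := by
  have ha' : ∀ n, a n = countNoAdjacentZeros n := fun n => (ha n).trans <|
    Nat.card_congr (Equiv.Perm.inversionSeqEquiv.subtypeEquiv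
      Equiv.Perm.meshAvoids_iff_noAdjacentZeros)
  refine ⟨by rw [ha', countNoAdjacentZeros_of_le_one zero_le_one],
    by rw [ha', countNoAdjacentZeros_of_le_one le_rfl], fun n hn => ?_⟩
  obtain ⟨m, rfl⟩ := Nat.exists_eq_add_of_le' hn
  rw [ha', ha', ha', Nat.add_sub_cancel, show m + 2 - 1 = m + 1 by omega,
    countNoAdjacentZeros_add_two]
end

section
/- Let p be the mesh pattern (12, {(0,0),(0,1),(0,2),(1,2),(2,0),(2,2)}). For every n ≥ 2 and every 1 ≤ i ≤ n−1, the number of permutations π of length n with π(n+1−i) = n (i.e. with the letter n in the i-th position counted from the right) that contain p equals (n−1)!/i. Consequently, the number of permutations of length n avoiding p is n! − Σ_{i=1}^{n−1} (n−1)!/i. -/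
/-
An occurrence of the pattern has to use the first letter of `π` and the letter `n`, and the
shading then says exactly that every letter to the right of `n` exceeds `π(1)`. So if `n`
stands at position `q = n + 1 - i` with `i ≤ n - 1`, then `π` contains the pattern iff `π(1)` is
the smallest of the `i` letters at positions `{1} ∪ (q, n]`. Composing on the right with a
transposition of two of these positions fixes `π(q) = n` and moves the minimum, so among the
`(n - 1)!` permutations with `π(q) = n` each of the `i` positions carries the minimum equally
often, namely `(n - 1)!/i` times. Summing over `i` counts the permutations containing the
pattern, and the avoiders are the rest.
-/

open Finset Equiv Equiv.Perm
open scoped Nat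

theorem Finset.card_eq_card_mul_card_fiber {ι M : Type*} [DecidableEq M] {f : ι → M}
    {s : Finset ι} {t : Finset M} (H : Set.MapsTo f s t) {b₀ : M}
    (hfib : ∀ b ∈ t, #{a ∈ s | f a = b} = #{a ∈ s | f a = b₀}) :
    #s = #t * #{a ∈ s | f a = b₀} := by
  rw [card_eq_sum_card_fiberwise H, sum_congr rfl hfib, sum_const, smul_eq_mul]

theorem Function.Injective.argminOn_eq_iff {α β : Type*} [LinearOrder β] [WellFoundedLT β]
    {f : α → β} (hf : f.Injective) {s : Set α} (hs : s.Nonempty) {u : α} (hu : u ∈ s) :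
    Function.argminOn f s hs = u ↔ ∀ z ∈ s, f u ≤ f z := by
  constructor
  · rintro rfl z hz
    exact Function.argminOn_le f s hz
  · intro h
    exact hf (le_antisymm (Function.argminOn_le f s hu) (h _ (Function.argminOn_mem f s hs)))

namespace Equiv.Perm

variable {α : Type*} [Fintype α] [DecidableEq α]

theorem card_filter_apply_eq (a b : α) :
    #{π : Perm α | π a = b} = (Fintype.card α - 1)! := by
  have hα : 0 < Fintype.card α := Fintype.card_pos_iff.2 ⟨a⟩
  have key := card_eq_card_mul_card_fiber (s := (univ : Finset (Perm α))) (t := univ)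
    (f := fun π => π a) (b₀ := b) (fun _ _ => mem_univ _)
    (fun c _ => card_equiv (Equiv.mulLeft (swap c b)) (by simp [swap_apply_eq_iff]))
  rw [card_univ, Fintype.card_perm, card_univ, ← Nat.mul_factorial_pred hα.ne'] at key
  exact (Nat.eq_of_mul_eq_mul_left hα key).symm

theorem card_mul_card_filter_apply_eq_and_forall_le [LinearOrder α] {a b t : α} {T : Finset α}
    (ha : a ∉ T) (ht : t ∈ T) :
    #T * #{π : Perm α | π a = b ∧ ∀ z ∈ T, π t ≤ π z} = (Fintype.card α - 1)! := by
  have hT : (T : Set α).Nonempty := ⟨t, ht⟩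
  let argmin (π : Perm α) : α := Function.argminOn π (T : Set α) hT
  have argmin_eq_iff {π : Perm α} {u : α} (hu : u ∈ T) : argmin π = u ↔ ∀ z ∈ T, π u ≤ π z :=
    π.injective.argminOn_eq_iff _ hu
  have hfib (u : α) (hu : u ∈ T) : #{π ∈ {π : Perm α | π a = b} | argmin π = u} =
      #{π ∈ {π : Perm α | π a = b} | argmin π = t} := by
    refine card_equiv (Equiv.mulRight (swap u t)) fun π => ?_
    have forall_swap_iff (P : α → Prop) : (∀ z ∈ T, P (swap u t z)) ↔ ∀ z ∈ T, P z := by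
      have hswap (z : α) (hz : z ∈ T) : swap u t z ∈ T := by
        rw [swap_apply_def]; split_ifs <;> assumption
      exact ⟨fun h z hz => by simpa using h _ (hswap z hz), fun h z hz => h _ (hswap z hz)⟩
    simp only [mem_filter, mem_univ, true_and, argmin_eq_iff hu, argmin_eq_iff ht,
      coe_mulRight, mul_apply, swap_apply_right, forall_swap_iff fun z => π u ≤ π z,
      swap_apply_of_ne_of_ne (ne_of_mem_of_not_mem hu ha).symm (ne_of_mem_of_not_mem ht ha).symm]
  rw [← card_filter_apply_eq a b,
    card_eq_card_mul_card_fiber (fun π _ => Function.argminOn_mem _ _ _) hfib, filter_filter]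
  congr 2
  ext π
  simp only [mem_filter, mem_univ, true_and]
  exact and_congr_right fun _ => (argmin_eq_iff ht).symm

end Equiv.Perm

def shading : Set (ℕ × ℕ) := {(0,0),(0,1),(0,2),(1,2),(2,0),(2,2)}

section

variable {n : ℕ}

theorem meshOccursIn_shading_iff (π : Perm (Fin n)) :
    MeshOccursIn (1 : Perm (Fin 2)) shading π ↔ ∃ a b : Fin n, a < b ∧ π a < π b ∧
      (∀ z, a ≤ z) ∧ (∀ z, π z ≤ π b) ∧ ∀ z, b < z → π a < π z := by
  simp only [MeshOccursIn, shading, Set.mem_insert_iff, Set.mem_singleton_iff, forall_eq_or_imp,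
    forall_eq, posOf, valOf, Fin.exists_fin_succ_pi]
  simp only [Nat.reduceAdd, Fin.strictMono_iff_lt_succ, Fin.cons_succ, Fin.forall_fin_one,
    Fin.castSucc_zero, Fin.cons_zero, Perm.one_def, refl_apply, Fin.forall_fin_two, not_lt_zero,
    iff_false, not_lt, Fin.cons_one, Fin.lt_one_iff, Std.le_refl, iff_true, true_and, one_ne_zero,
    and_true, zero_le, ↓reduceDIte, ↓reduceIte, Order.lt_add_one_iff, Fin.zero_eta,
    Order.add_one_le_iff, Fin.val_fin_lt, refl_symm, not_and, Nat.add_one_sub_one, Fin.mk_one,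
    Nat.reduceLeDiff, OfNat.ofNat_ne_zero, Fin.is_lt, exists_const]
  constructor
  · rintro ⟨a, b, hab, ⟨hπ, -⟩, h00, h01, h02, h12, h20, h22⟩
    refine ⟨a, b, hab, hπ, fun z => ?_, fun z => ?_, fun z hz => ?_⟩
    · by_contra! hz
      have hπz : π a < π z := (h00 z hz).lt_of_ne (π.injective.ne hz.ne')
      exact π.injective.ne (hz.trans hab).ne (le_antisymm (h02 z hz) (h01 z hz hπz))
    · rcases lt_trichotomy z a with hza | rfl | haz
      · exact h02 z hza
      · exact hπ.le
      rcases lt_trichotomy z b with hzb | rfl | hbz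
      · exact h12 z haz hzb
      · exact le_rfl
      · exact h22 z hbz
    · exact (h20 z hz).lt_of_ne (π.injective.ne (hab.trans hz).ne)
  · rintro ⟨a, b, hab, hπ, ha, hb, hbz⟩
    have not_lt_a (z : Fin n) : ¬ z < a := not_lt.2 (ha z)
    exact ⟨a, b, hab, ⟨hπ, hπ.le⟩, fun z hz => absurd hz (not_lt_a z),
      fun z hz => absurd hz (not_lt_a z), fun z _ => hb z, fun z _ _ => hb z,
      fun z hz => (hbz z hz).le, fun z _ => hb z⟩

theorem meshOccursIn_shading_iff_of_forall_le [NeZero n] {π : Perm (Fin n)} {q : Fin n}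
    (hq : ∀ z, π z ≤ π q) :
    MeshOccursIn (1 : Perm (Fin 2)) shading π ↔ q ≠ 0 ∧ ∀ z, q < z → π 0 < π z := by
  rw [meshOccursIn_shading_iff]
  constructor
  · rintro ⟨a, b, hab, -, ha, hb, hbz⟩
    obtain rfl : a = 0 := le_antisymm (ha 0) (Fin.zero_le a)
    obtain rfl : b = q := π.injective (le_antisymm (hq b) (hb q))
    exact ⟨hab.ne', hbz⟩
  · rintro ⟨hq0, hz⟩
    have h0q : 0 < q := Fin.pos_iff_ne_zero.2 hq0
    exact ⟨0, q, h0q, (hq 0).lt_of_ne (π.injective.ne h0q.ne), Fin.zero_le, hq, hz⟩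

theorem card_filter_apply_eq_and_forall_lt [NeZero n] {q : Fin n} (hq : q ≠ 0) (v : Fin n) :
    #{π : Perm (Fin n) | π q = v ∧ ∀ z, q < z → π 0 < π z} = (n - 1)! / (n - q) := by
  have h0 : (0 : Fin n) ∉ Ioi q := by simp
  have hT : #(insert 0 (Ioi q)) = n - q := by
    rw [card_insert_of_notMem h0, Fin.card_Ioi]
    omega
  have key := card_mul_card_filter_apply_eq_and_forall_le (a := q) (b := v)
    (by simpa using hq) (mem_insert_self 0 (Ioi q))
  rw [hT, Fintype.card_fin] at key
  have hcond (π : Perm (Fin n)) :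
      (∀ z ∈ insert 0 (Ioi q), π 0 ≤ π z) ↔ ∀ z, q < z → π 0 < π z := by
    simp only [forall_mem_insert, le_rfl, true_and, mem_Ioi]
    refine forall₂_congr fun z hz => ⟨fun h => h.lt_of_ne ?_, le_of_lt⟩
    exact π.injective.ne (ne_zero_of_lt hz).symm
  simp only [hcond] at key
  exact Nat.eq_div_of_mul_eq_right (by omega) key

theorem le_mk_sub_one (hn : 0 < n) (z : Fin n) : z ≤ ⟨n - 1, by omega⟩ :=
  Fin.le_def.2 (Nat.le_sub_one_of_lt z.isLt)

theorem natCard_apply_eq_top_and_meshOccursIn {i : ℕ} (h1 : 1 ≤ i) (h2 : i ≤ n - 1) :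
    Nat.card {π : Perm (Fin n) // π ⟨n - i, by omega⟩ = ⟨n - 1, by omega⟩ ∧
      MeshOccursIn (1 : Perm (Fin 2)) shading π} = (n - 1)! / i := by
  have : NeZero n := ⟨by omega⟩
  set q : Fin n := ⟨n - i, by omega⟩
  have hq : q ≠ 0 := Fin.ne_of_val_ne (by simp only [q, Fin.val_zero]; omega)
  have hiff (π : Perm (Fin n)) (hπq : π q = ⟨n - 1, by omega⟩) :
      MeshOccursIn (1 : Perm (Fin 2)) shading π ↔ ∀ z, q < z → π 0 < π z := by
    rw [meshOccursIn_shading_iff_of_forall_le fun z => hπq ▸ le_mk_sub_one (by omega) (π z),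
      and_iff_right hq]
  rw [Nat.card_congr (Equiv.subtypeEquivRight fun π => and_congr_right (hiff π)),
    Nat.card_eq_fintype_card, Fintype.card_subtype, card_filter_apply_eq_and_forall_lt hq]
  congr
  show n - (n - i) = i
  omega

theorem natCard_meshOccursIn (hn : 2 ≤ n) :
    Nat.card {π : Perm (Fin n) // MeshOccursIn (1 : Perm (Fin 2)) shading π} =
      ∑ i ∈ Icc 1 (n - 1), (n - 1)! / i := by
  classical
  have : NeZero n := ⟨by omega⟩
  -- `n - π⁻¹(n)` is the position of the letter `n` counted from the right
  rw [Nat.card_eq_fintype_card, Fintype.card_subtype, card_eq_sum_card_fiberwise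
    (f := fun π => n - (π.symm ⟨n - 1, by omega⟩ : ℕ)) (t := Icc 1 (n - 1))]
  · refine sum_congr rfl fun i hi => ?_
    rw [mem_Icc] at hi
    rw [filter_filter, ← natCard_apply_eq_top_and_meshOccursIn hi.1 hi.2,
      Nat.card_eq_fintype_card, Fintype.card_subtype]
    congr 1
    ext π
    have := (π.symm ⟨n - 1, by omega⟩).isLt
    simp only [mem_filter, mem_univ, true_and]
    rw [and_comm, ← eq_symm_apply, Fin.ext_iff]
    refine and_congr_left' ?_
    dsimp only
    omega
  · intro π hπ
    have hmax (z : Fin n) : π z ≤ π (π.symm ⟨n - 1, by omega⟩) := by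
      rw [apply_symm_apply]; exact le_mk_sub_one (by omega) _
    have := Fin.val_ne_zero_iff.2
      ((meshOccursIn_shading_iff_of_forall_le hmax).1 (by simpa using hπ)).1
    simp only [coe_Icc, Set.mem_Icc]
    omega

end

/-- For `n ≥ 2` and `1 ≤ i ≤ n-1`, the number of permutations
of length `n` with the letter `n` in the `i`-th position from the right that
contain `(12, {(0,0),(0,1),(0,2),(1,2),(2,0),(2,2)})` is `(n-1)!/i`; hence
the number of avoiders is `n! − Σ_{i=1}^{n-1} (n-1)!/i`. -/
theorem stmt11 (n : ℕ) (hn : 2 ≤ n) :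
    (∀ (i : ℕ) (h1 : 1 ≤ i) (h2 : i ≤ n - 1),
      Nat.card {π : Equiv.Perm (Fin n) //
        π ⟨n - i, by omega⟩ = ⟨n - 1, by omega⟩ ∧
        MeshOccursIn (1 : Equiv.Perm (Fin 2)) {(0,0),(0,1),(0,2),(1,2),(2,0),(2,2)} π} =
      (n - 1).factorial / i) ∧
    Nat.card {π : Equiv.Perm (Fin n) //
        MeshAvoids (1 : Equiv.Perm (Fin 2)) {(0,0),(0,1),(0,2),(1,2),(2,0),(2,2)} π} =
      n.factorial - ∑ i ∈ Finset.Icc 1 (n - 1), (n - 1).factorial / i := by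
  classical
  refine ⟨fun i h1 h2 => natCard_apply_eq_top_and_meshOccursIn h1 h2, ?_⟩
  simp only [MeshAvoids]
  rw [Nat.card_eq_fintype_card, Fintype.card_subtype_compl, Fintype.card_perm,
    Fintype.card_fin, ← Nat.card_eq_fintype_card]
  exact congrArg (n.factorial - ·) (natCard_meshOccursIn hn)
end
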